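/- arXiv:2409.01920 — 8 statements merged into one kernel-verified Lean document; each statement's English description precedes it below -/
import Mathlib

section
/- Let n ≥ 1 be an integer, let p be a prime, and let A, B be n×n matrices over 𝔽_p. Then |S(A,B;p)| ≤ #{(V,Z) : V, Z are n×n matrices over 𝔽_p with VZ − ZV + A = 0}, and this right-hand side equals S(A,0;p). -/
open scoped BigOperators

/-- The additive character `e_p(x) = exp(2πi x̃ / p)` on `ℤ/pℤ`. -/
noncomputable def ep (p : ℕ) (x : ZMod p) : ℂ :=
  Complex.exp (2 * Real.pi * Complex.I * (x.val : ℂ) / p)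

/-- The matrix exponential sum `S(A,B;p) = ∑_{UV = VU} e_p(tr(AU + BV))`, the sum being
over all pairs `(U,V)` of commuting `n × n` matrices over `𝔽_p`. -/
noncomputable def Sexp (n p : ℕ) [NeZero p]
    (A B : Matrix (Fin n) (Fin n) (ZMod p)) : ℂ :=
  ∑ UV : Matrix (Fin n) (Fin n) (ZMod p) × Matrix (Fin n) (Fin n) (ZMod p),
    if UV.1 * UV.2 = UV.2 * UV.1
    then ep p (Matrix.trace (A * UV.1 + B * UV.2)) else 0

/-!
Split `S(A,B)` according to `V`: the inner sum over `U` is a character sum over the additive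
group of matrices commuting with `V`, hence a natural number (its order or `0`). The triangle
inequality then gives `|S(A,B)| ≤ S(A,0)`. Orthogonality of `U ↦ ψ(tr(WU))` (ψ primitive), with
`tr((VZ - ZV + A)U) = tr(AU) + tr((UV - VU)Z)`, counts the solutions of `VZ - ZV + A = 0` as
`S(A,0)`.
-/

open Finset

lemma AddChar.exists_sum_ite_mem_eq_natCast {G M : Type*} [AddGroup G] [Fintype G]
    [CommSemiring M] [IsDomain M] (φ : AddChar G M) (H : AddSubgroup G)
    [DecidablePred (· ∈ H)] :
    ∃ m : ℕ, ∑ x, (if x ∈ H then φ x else 0) = m := by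
  classical
  refine ⟨if φ.compAddMonoidHom H.subtype = 0 then Fintype.card H else 0, ?_⟩
  rw [← sum_filter, sum_subtype (p := (· ∈ H)) _ (fun _ => by simp) (φ ·)]
  exact (φ.compAddMonoidHom H.subtype).sum_eq_ite.trans (by push_cast; rfl)

namespace Matrix

variable {ι R : Type*} [Fintype ι] [CommRing R]

lemma trace_commutator_add_mul (V Z A U : Matrix ι ι R) :
    trace ((V * Z - Z * V + A) * U) = trace (A * U) + trace ((U * V - V * U) * Z) := by
  have h₁ : trace (V * Z * U) = trace (U * V * Z) := by
    rw [trace_mul_comm, Matrix.mul_assoc]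
  have h₂ : trace (Z * V * U) = trace (V * U * Z) := by
    rw [Matrix.mul_assoc, trace_mul_comm]
  simp only [add_mul, sub_mul, trace_add, trace_sub, h₁, h₂]
  ring

variable [DecidableEq ι] [Fintype R] [DecidableEq R]

lemma sum_addChar_trace_mul {ψ : AddChar R ℂ} (hψ : ψ.IsPrimitive) (W : Matrix ι ι R) :
    ∑ U, ψ (trace (W * U)) = if W = 0 then (Fintype.card (Matrix ι ι R) : ℂ) else 0 := by
  have h_trivial_iff :
      ψ.compAddMonoidHom ((traceAddMonoidHom ι R).comp (AddMonoidHom.mulLeft W)) = 0 ↔ W = 0 := by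
    refine ⟨fun h => ?_, fun h => by ext U; simp [h]⟩
    ext j i
    by_contra hW
    refine hψ hW (DFunLike.ext _ _ fun c => ?_)
    simpa [trace_mul_single, mul_comm] using AddChar.eq_zero_iff.1 h (single i j c)
  exact (AddChar.sum_eq_ite _).trans (if_congr h_trivial_iff rfl rfl)

noncomputable def commutingSum (ψ : AddChar R ℂ) (A B : Matrix ι ι R) : ℂ :=
  ∑ UV : Matrix ι ι R × Matrix ι ι R,
    if UV.1 * UV.2 = UV.2 * UV.1 then ψ (trace (A * UV.1 + B * UV.2)) else 0

variable (ψ : AddChar R ℂ)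

lemma commutingSum_eq_sum_centralizer (A B : Matrix ι ι R) :
    commutingSum ψ A B = ∑ V, ψ (trace (B * V)) *
      ∑ U, if U * V = V * U then ψ (trace (A * U)) else 0 := by
  rw [commutingSum, Fintype.sum_prod_type, sum_comm]
  refine sum_congr rfl fun V _ => ?_
  rw [mul_sum]
  refine sum_congr rfl fun U _ => ?_
  split_ifs
  · rw [trace_add, AddChar.map_add_eq_mul, mul_comm]
  · rw [mul_zero]

lemma norm_commutingSum_le (A B : Matrix ι ι R) :
    ‖commutingSum ψ A B‖ ≤ ‖commutingSum ψ A 0‖ := by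
  have hc (V : Matrix ι ι R) : ∃ m : ℕ,
      ∑ U, (if U * V = V * U then ψ (trace (A * U)) else 0) = m := by
    classical
    obtain ⟨m, hm⟩ := (ψ.compAddMonoidHom ((traceAddMonoidHom ι R).comp
      (AddMonoidHom.mulLeft A))).exists_sum_ite_mem_eq_natCast
        (Subring.centralizer {V}).toAddSubgroup
    refine ⟨m, Eq.trans ?_ hm⟩
    simp [Set.mem_centralizer_iff, eq_comm]
  choose m hm using hc
  simp only [commutingSum_eq_sum_centralizer, hm, zero_mul, trace_zero, AddChar.map_zero_eq_one,
    one_mul]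
  calc ‖∑ V, ψ (trace (B * V)) * (m V : ℂ)‖
      ≤ ∑ V, ‖ψ (trace (B * V)) * (m V : ℂ)‖ := norm_sum_le _ _
    _ = ‖∑ V, (m V : ℂ)‖ := by
      simp only [norm_mul, AddChar.norm_apply, one_mul, Complex.norm_natCast]
      exact_mod_cast (Complex.norm_natCast _).symm

variable {ψ} in
lemma commutingSum_zero_right_eq_card (hψ : ψ.IsPrimitive) (A : Matrix ι ι R) :
    commutingSum ψ A 0 =
      #{VZ : Matrix ι ι R × Matrix ι ι R | VZ.1 * VZ.2 - VZ.2 * VZ.1 + A = 0} := by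
  have hq : (Fintype.card (Matrix ι ι R) : ℂ) ≠ 0 := Nat.cast_ne_zero.2 Fintype.card_ne_zero
  refine mul_left_cancel₀ hq ?_
  calc (Fintype.card (Matrix ι ι R) : ℂ) * commutingSum ψ A 0
      = ∑ U, ∑ V, ψ (trace (A * U)) * ∑ Z, ψ (trace ((U * V - V * U) * Z)) := by
        rw [commutingSum, Fintype.sum_prod_type, mul_sum]
        refine sum_congr rfl fun U _ => ?_
        rw [mul_sum]
        refine sum_congr rfl fun V _ => ?_
        simp only [sum_addChar_trace_mul hψ, sub_eq_zero, zero_mul, add_zero]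
        split_ifs <;> ring
    _ = ∑ VZ : Matrix ι ι R × Matrix ι ι R,
          ∑ U, ψ (trace ((VZ.1 * VZ.2 - VZ.2 * VZ.1 + A) * U)) := by
        simp only [trace_commutator_add_mul, AddChar.map_add_eq_mul, mul_sum]
        rw [Fintype.sum_prod_type, sum_comm]
        exact sum_congr rfl fun V _ => sum_comm
    _ = (Fintype.card (Matrix ι ι R) : ℂ) *
          #{VZ : Matrix ι ι R × Matrix ι ι R | VZ.1 * VZ.2 - VZ.2 * VZ.1 + A = 0} := by
        simp only [sum_addChar_trace_mul hψ, sum_ite, sum_const_zero, add_zero, sum_const,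
          nsmul_eq_mul, mul_comm]

end Matrix

lemma ep_eq_stdAddChar {p : ℕ} [NeZero p] (x : ZMod p) : ep p x = ZMod.stdAddChar x := by
  conv_rhs => rw [← ZMod.natCast_zmod_val x, ← Int.cast_natCast, ZMod.stdAddChar_coe]
  rw [ep]
  push_cast
  ring_nf

lemma Sexp_eq_commutingSum (n p : ℕ) [NeZero p] (A B : Matrix (Fin n) (Fin n) (ZMod p)) :
    Sexp n p A B = Matrix.commutingSum ZMod.stdAddChar A B := by
  simp only [Sexp, Matrix.commutingSum, ep_eq_stdAddChar]

theorem abs_Sexp_le_card_fibre_general (n : ℕ) (p : ℕ) [Fact p.Prime]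
    (A B : Matrix (Fin n) (Fin n) (ZMod p)) :
    ‖Sexp n p A B‖ ≤
      (Set.ncard {VZ : Matrix (Fin n) (Fin n) (ZMod p) × Matrix (Fin n) (Fin n) (ZMod p) |
        VZ.1 * VZ.2 - VZ.2 * VZ.1 + A = 0} : ℝ) ∧
    Sexp n p A 0 =
      (Set.ncard {VZ : Matrix (Fin n) (Fin n) (ZMod p) × Matrix (Fin n) (Fin n) (ZMod p) |
        VZ.1 * VZ.2 - VZ.2 * VZ.1 + A = 0} : ℂ) := by
  have hS0 := Matrix.commutingSum_zero_right_eq_card (ZMod.isPrimitive_stdAddChar p) A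
  rw [← Sexp_eq_commutingSum, ← Set.toFinset_ofPred, ← Set.ncard_eq_toFinset_card'] at hS0
  refine ⟨?_, hS0⟩
  calc ‖Sexp n p A B‖ ≤ ‖Sexp n p A 0‖ := by
        simpa only [Sexp_eq_commutingSum] using Matrix.norm_commutingSum_le _ A B
    _ = _ := by rw [hS0, Complex.norm_natCast]

/-- `|S(A,B;p)| ≤ #{(V,Z) : VZ - ZV + A = 0}`, and moreover this cardinality equals
`S(A,0;p)`. -/
theorem abs_Sexp_le_card_fibre (n : ℕ) (hn : 1 ≤ n) (p : ℕ) [Fact p.Prime]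
    (A B : Matrix (Fin n) (Fin n) (ZMod p)) :
    ‖Sexp n p A B‖ ≤
      (Set.ncard {VZ : Matrix (Fin n) (Fin n) (ZMod p) × Matrix (Fin n) (Fin n) (ZMod p) |
        VZ.1 * VZ.2 - VZ.2 * VZ.1 + A = 0} : ℝ) ∧
    Sexp n p A 0 =
      (Set.ncard {VZ : Matrix (Fin n) (Fin n) (ZMod p) × Matrix (Fin n) (Fin n) (ZMod p) |
        VZ.1 * VZ.2 - VZ.2 * VZ.1 + A = 0} : ℂ) :=
  abs_Sexp_le_card_fibre_general n p A B
end

section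
/- Let 𝔽_q be a finite field with q elements, let n ≥ 2 and 1 ≤ k ≤ n−1 be integers, and let M be an n×n matrix over 𝔽_q. Suppose there exists h₀ ∈ 1+E such that not both p₁₁(h₀⁻¹Mh₀) = 0 and p₂₁(h₀⁻¹Mh₀) = 0. Then #{h ∈ 1+E : p₁₁(h⁻¹Mh) = 0} ≤ q^(k(n−k)−k). -/
/-- `N` lies in `E`, i.e. the blocks `p₁₁(N)`, `p₂₁(N)`, `p₂₂(N)` (relative to the
partition `{0,…,k-1} ∪ {k,…,n-1}`) all vanish. -/
def memE {n : ℕ} {F : Type*} (k : ℕ) (N : Matrix (Fin n) (Fin n) F) [Zero F] : Prop :=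
  ∀ i j : Fin n, ¬((i : ℕ) < k ∧ k ≤ (j : ℕ)) → N i j = 0

lemma key_entry {n k : ℕ} {F : Type} [Field F] (M N : Matrix (Fin n) (Fin n) F)
    (hN : memE k N) (i j : Fin n) (hj : (j : ℕ) < k) :
    ((1 - N) * M * (1 + N)) i j = M i j - ∑ l, N i l * M l j := by
  have hcol : ∀ a, (M * (1 + N)) a j = M a j := by
    intro a
    rw [mul_add, mul_one, Matrix.add_apply, Matrix.mul_apply]
    have h0 : ∀ l : Fin n, l ∈ Finset.univ → M a l * N l j = 0 := by
      intro l _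
      rw [hN l j (by omega), mul_zero]
    rw [Finset.sum_congr rfl h0, Finset.sum_const_zero, add_zero]
  rw [mul_assoc, Matrix.mul_apply]
  simp only [hcol]
  have : ∑ a, (1 - N) i a * M a j = ((1 - N) * M) i j := (Matrix.mul_apply).symm
  rw [this, Matrix.sub_mul, Matrix.one_mul, Matrix.sub_apply, Matrix.mul_apply]

/-- Lemma 5.2(1): if for some `h₀ = 1 + N₀ ∈ 1+E` the blocks `p₁₁(h₀⁻¹ M h₀)` and
`p₂₁(h₀⁻¹ M h₀)` are not both zero, then the number of `h = 1 + N ∈ 1+E` with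
`p₁₁(h⁻¹ M h) = 0` is at most `q^(k(n-k)-k)`.  (Here `h⁻¹ = 1 - N`.) -/
theorem E_avg_p11 (F : Type) [Field F] [Fintype F] (q : ℕ) (hq : Fintype.card F = q)
    (n k : ℕ) (hn : 2 ≤ n) (hk1 : 1 ≤ k) (hk2 : k ≤ n - 1)
    (M : Matrix (Fin n) (Fin n) F)
    (h0 : ∃ N₀ : Matrix (Fin n) (Fin n) F, memE k N₀ ∧
      ¬((∀ i j : Fin n, (i : ℕ) < k → (j : ℕ) < k →
            ((1 - N₀) * M * (1 + N₀)) i j = 0) ∧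
        (∀ i j : Fin n, k ≤ (i : ℕ) → (j : ℕ) < k →
            ((1 - N₀) * M * (1 + N₀)) i j = 0))) :
    Set.ncard {h : Matrix (Fin n) (Fin n) F |
        ∃ N : Matrix (Fin n) (Fin n) F, memE k N ∧ h = 1 + N ∧
          ∀ i j : Fin n, (i : ℕ) < k → (j : ℕ) < k → ((1 - N) * M * h) i j = 0}
      ≤ q ^ (k * (n - k) - k) := by
  classical
  have hkn : k < n := by omega
  set A := {h : Matrix (Fin n) (Fin n) F |
        ∃ N : Matrix (Fin n) (Fin n) F, memE k N ∧ h = 1 + N ∧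
          ∀ i j : Fin n, (i : ℕ) < k → (j : ℕ) < k → ((1 - N) * M * h) i j = 0} with hA
  by_cases hC : ∀ i j : Fin n, k ≤ (i : ℕ) → (j : ℕ) < k → M i j = 0
  · -- the "C = 0" case: A is empty
    obtain ⟨N₀, hN₀E, hN₀⟩ := h0
    have h2 : ∀ i j : Fin n, k ≤ (i : ℕ) → (j : ℕ) < k →
        ((1 - N₀) * M * (1 + N₀)) i j = 0 := by
      intro i j hi hj
      rw [key_entry M N₀ hN₀E i j hj]
      have : ∀ l : Fin n, l ∈ Finset.univ → N₀ i l * M l j = 0 := by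
        intro l _
        rw [hN₀E i l (by omega), zero_mul]
      rw [Finset.sum_congr rfl this, Finset.sum_const_zero, hC i j hi hj, sub_zero]
    have h1 : ¬ ∀ i j : Fin n, (i : ℕ) < k → (j : ℕ) < k →
        ((1 - N₀) * M * (1 + N₀)) i j = 0 := fun h => hN₀ ⟨h, h2⟩
    push_neg at h1
    obtain ⟨i, j, hi, hj, hne⟩ := h1
    rw [key_entry M N₀ hN₀E i j hj] at hne
    have hMij : M i j ≠ 0 := by
      intro h
      apply hne
      have : ∀ l : Fin n, l ∈ Finset.univ → N₀ i l * M l j = 0 := by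
        intro l _
        by_cases hl : k ≤ (l : ℕ)
        · rw [hC l j hl hj, mul_zero]
        · rw [hN₀E i l (by omega), zero_mul]
      rw [Finset.sum_congr rfl this, Finset.sum_const_zero, h, sub_zero]
    have hAe : A = ∅ := by
      ext h
      simp only [hA, Set.mem_setOf_eq, Set.mem_empty_iff_false, iff_false]
      rintro ⟨N, hNE, rfl, hcond⟩
      have := hcond i j hi hj
      rw [key_entry M N hNE i j hj] at this
      apply hMij
      have hz : ∀ l : Fin n, l ∈ Finset.univ → N i l * M l j = 0 := by
        intro l _
        by_cases hl : k ≤ (l : ℕ)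
        · rw [hC l j hl hj, mul_zero]
        · rw [hNE i l (by omega), zero_mul]
      rw [Finset.sum_congr rfl hz, Finset.sum_const_zero, sub_zero] at this
      exact this
    rw [hAe, Set.ncard_empty]
    exact Nat.zero_le _
  · -- the "C ≠ 0" case
    push_neg at hC
    obtain ⟨i₀, j₀, hi₀, hj₀, hM₀⟩ := hC
    set J := {j : Fin n // k ≤ (j : ℕ) ∧ j ≠ i₀} with hJ
    set f : Matrix (Fin n) (Fin n) F → (Fin k → J → F) :=
      fun h i j => (h - 1) (Fin.castLE hkn.le i) j.1 with hf
    have hinj : Set.InjOn f A := by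
      rintro h₁ ⟨N₁, hE₁, rfl, hc₁⟩ h₂ ⟨N₂, hE₂, rfl, hc₂⟩ hfe
      have hs₁ : (1 : Matrix (Fin n) (Fin n) F) + N₁ - 1 = N₁ := add_sub_cancel_left 1 N₁
      have hs₂ : (1 : Matrix (Fin n) (Fin n) F) + N₂ - 1 = N₂ := add_sub_cancel_left 1 N₂
      suffices hNN : N₁ = N₂ by rw [hNN]
      -- entries away from column i₀ agree
      have hsame : ∀ i j : Fin n, (i : ℕ) < k → k ≤ (j : ℕ) → j ≠ i₀ → N₁ i j = N₂ i j := by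
        intro i j hi hj hjne
        have := congrFun (congrFun hfe ⟨(i : ℕ), hi⟩) ⟨j, hj, hjne⟩
        simp only [hf, hs₁, hs₂] at this
        have hcast : Fin.castLE hkn.le (⟨(i : ℕ), hi⟩ : Fin k) = i := by
          apply Fin.ext; rfl
        rwa [hcast] at this
      ext i j
      by_cases hik : (i : ℕ) < k
      · by_cases hjk : k ≤ (j : ℕ)
        · by_cases hji : j = i₀
          · -- column i₀: determined by the vanishing condition
            rw [hji]
            have e₁ := hc₁ i j₀ hik hj₀
            have e₂ := hc₂ i j₀ hik hj₀
            rw [key_entry M N₁ hE₁ i j₀ hj₀] at e₁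
            rw [key_entry M N₂ hE₂ i j₀ hj₀] at e₂
            have hmem : i₀ ∈ (Finset.univ : Finset (Fin n)) := Finset.mem_univ _
            have split₁ : ∑ l, N₁ i l * M l j₀ =
                N₁ i i₀ * M i₀ j₀ + ∑ l ∈ Finset.univ.erase i₀, N₁ i l * M l j₀ :=
              (Finset.add_sum_erase _ _ hmem).symm
            have split₂ : ∑ l, N₂ i l * M l j₀ =
                N₂ i i₀ * M i₀ j₀ + ∑ l ∈ Finset.univ.erase i₀, N₂ i l * M l j₀ :=
              (Finset.add_sum_erase _ _ hmem).symm
            have hrest : ∑ l ∈ Finset.univ.erase i₀, N₁ i l * M l j₀ =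
                ∑ l ∈ Finset.univ.erase i₀, N₂ i l * M l j₀ := by
              apply Finset.sum_congr rfl
              intro l hl
              have hlne : l ≠ i₀ := (Finset.mem_erase.mp hl).1
              by_cases hlk : k ≤ (l : ℕ)
              · rw [hsame i l hik hlk hlne]
              · rw [hE₁ i l (by omega), hE₂ i l (by omega)]
            have e₁' : M i j₀ = ∑ l, N₁ i l * M l j₀ := sub_eq_zero.mp e₁
            have e₂' : M i j₀ = ∑ l, N₂ i l * M l j₀ := sub_eq_zero.mp e₂
            rw [split₁, hrest] at e₁'
            rw [split₂] at e₂'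
            exact mul_right_cancel₀ hM₀ (add_right_cancel (e₁'.symm.trans e₂'))
          · exact hsame i j hik hjk hji
        · rw [hE₁ i j (by omega), hE₂ i j (by omega)]
      · rw [hE₁ i j (by omega), hE₂ i j (by omega)]
    -- count
    have hle : A.ncard ≤ Fintype.card (Fin k → J → F) := by
      have := Set.ncard_le_ncard (Set.image_subset_range f A)
        (Set.finite_range f)
      rw [Set.ncard_image_of_injOn hinj] at this
      calc A.ncard ≤ (Set.range f).ncard := this
        _ ≤ (Set.univ : Set (Fin k → J → F)).ncard :=
            Set.ncard_le_ncard (Set.subset_univ _) Set.finite_univ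
        _ = Fintype.card (Fin k → J → F) := by
            rw [Set.ncard_univ, Nat.card_eq_fintype_card]
    have cardJ : Fintype.card J = n - k - 1 := by
      rw [Fintype.card_subtype]
      have : (Finset.univ.filter fun j : Fin n => k ≤ (j : ℕ) ∧ j ≠ i₀) =
          (Finset.Ici (⟨k, hkn⟩ : Fin n)).erase i₀ := by
        ext j
        simp only [Finset.mem_filter, Finset.mem_univ, true_and, Finset.mem_erase,
          Finset.mem_Ici, Fin.le_def]
        tauto
      rw [this, Finset.card_erase_of_mem (by simp [Finset.mem_Ici, Fin.le_def]; exact hi₀),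
        Fin.card_Ici]
    have cardfun : Fintype.card (Fin k → J → F) = q ^ (k * (n - k) - k) := by
      rw [Fintype.card_fun, Fintype.card_fun, hq, cardJ, Fintype.card_fin, ← pow_mul]
      congr 1
      have h1 : 1 ≤ n - k := by omega
      obtain ⟨m, hm⟩ : ∃ m, n - k = m + 1 := ⟨n - k - 1, by omega⟩
      rw [hm]
      simp [Nat.mul_add, Nat.add_sub_cancel, Nat.mul_comm]
    rw [← cardfun]
    exact hle
end

section
/- Let 𝔽_q be a finite field with q elements, let n ≥ 2 and 1 ≤ k ≤ n−1 be integers, and let M be an n×n matrix over 𝔽_q. Suppose there exists h₀ ∈ 1+E such that not all of p₁₁(h₀⁻¹Mh₀), p₂₁(h₀⁻¹Mh₀), p₂₂(h₀⁻¹Mh₀) are zero. Then #{h ∈ 1+E : p₁₁(h⁻¹Mh) = 0 and p₂₂(h⁻¹Mh) = 0} ≤ q^(k(n−k)−(n−1)). -/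
section aux

variable {n k : ℕ} {F : Type} [Field F]

private lemma entry_lt (M N : Matrix (Fin n) (Fin n) F) (hN : memE k N) (i j : Fin n)
    (hj : (j : ℕ) < k) :
    ((1 - N) * M * (1 + N)) i j = M i j - ∑ l, N i l * M l j := by
  have h1 : (1 - N) * M * (1 + N) = (M - N * M) + ((1 - N) * M) * N := by noncomm_ring
  have h2 : ((((1 : Matrix (Fin n) (Fin n) F) - N) * M) * N) i j = 0 := by
    rw [Matrix.mul_apply]
    exact Finset.sum_eq_zero fun l _ => by rw [hN l j (by omega), mul_zero]
  rw [h1, Matrix.add_apply, h2, add_zero, Matrix.sub_apply, Matrix.mul_apply]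

private lemma entry_ge (M N : Matrix (Fin n) (Fin n) F) (hN : memE k N) (i j : Fin n)
    (hi : k ≤ (i : ℕ)) :
    ((1 - N) * M * (1 + N)) i j = M i j + ∑ l, M i l * N l j := by
  have h1 : (1 - N) * M * (1 + N) = (M + M * N) - N * (M * (1 + N)) := by noncomm_ring
  have h2 : (N * (M * ((1 : Matrix (Fin n) (Fin n) F) + N))) i j = 0 := by
    rw [Matrix.mul_apply]
    exact Finset.sum_eq_zero fun l _ => by rw [hN i l (by omega), zero_mul]
  rw [h1, Matrix.sub_apply, h2, sub_zero, Matrix.add_apply, Matrix.mul_apply]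

/-- Key injectivity: two solutions agreeing off row `j₀` and column `i₀` are equal. -/
private lemma inj_aux (M N N' : Matrix (Fin n) (Fin n) F)
    (hN : memE k N) (hN' : memE k N')
    {i₀ j₀ : Fin n} (hi₀ : k ≤ (i₀ : ℕ)) (hj₀ : (j₀ : ℕ) < k) (hc : M i₀ j₀ ≠ 0)
    (h11 : ∀ i j : Fin n, (i : ℕ) < k → (j : ℕ) < k → ((1 - N) * M * (1 + N)) i j = 0)
    (h22 : ∀ i j : Fin n, k ≤ (i : ℕ) → k ≤ (j : ℕ) → ((1 - N) * M * (1 + N)) i j = 0)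
    (h11' : ∀ i j : Fin n, (i : ℕ) < k → (j : ℕ) < k → ((1 - N') * M * (1 + N')) i j = 0)
    (h22' : ∀ i j : Fin n, k ≤ (i : ℕ) → k ≤ (j : ℕ) → ((1 - N') * M * (1 + N')) i j = 0)
    (hfree : ∀ i l : Fin n, (i : ℕ) < k → (i : ℕ) ≠ (j₀ : ℕ) → k ≤ (l : ℕ) →
      (l : ℕ) ≠ (i₀ : ℕ) → N i l = N' i l) :
    N = N' := by
  -- Step 1: columns `i₀` agree off row `j₀`.
  have step1 : ∀ i : Fin n, (i : ℕ) < k → (i : ℕ) ≠ (j₀ : ℕ) → N i i₀ = N' i i₀ := by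
    intro i hik hij
    have e1 := entry_lt M N hN i j₀ hj₀
    have e2 := entry_lt M N' hN' i j₀ hj₀
    rw [h11 i j₀ hik hj₀] at e1
    rw [h11' i j₀ hik hj₀] at e2
    have hsum : ∑ l, (N i l - N' i l) * M l j₀ = 0 := by
      simp only [sub_mul, Finset.sum_sub_distrib]
      linear_combination e1 - e2
    have hsingle : ∑ l, (N i l - N' i l) * M l j₀ = (N i i₀ - N' i i₀) * M i₀ j₀ := by
      refine Finset.sum_eq_single_of_mem i₀ (Finset.mem_univ i₀) (fun l _ hl => ?_)
      have : N i l = N' i l := by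
        by_cases hlk : k ≤ (l : ℕ)
        · exact hfree i l hik hij hlk (fun h => hl (Fin.ext h))
        · rw [hN i l (by omega), hN' i l (by omega)]
      rw [this, sub_self, zero_mul]
    rw [hsingle] at hsum
    rcases mul_eq_zero.mp hsum with h | h
    · exact sub_eq_zero.mp h
    · exact absurd h hc
  -- Step 2: row `j₀` agrees everywhere.
  have step2 : ∀ j : Fin n, k ≤ (j : ℕ) → N j₀ j = N' j₀ j := by
    intro j hjk
    have e1 := entry_ge M N hN i₀ j hi₀
    have e2 := entry_ge M N' hN' i₀ j hi₀
    rw [h22 i₀ j hi₀ hjk] at e1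
    rw [h22' i₀ j hi₀ hjk] at e2
    have hsum : ∑ l, M i₀ l * (N l j - N' l j) = 0 := by
      simp only [mul_sub, Finset.sum_sub_distrib]
      linear_combination e2 - e1
    have hsingle : ∑ l, M i₀ l * (N l j - N' l j) = M i₀ j₀ * (N j₀ j - N' j₀ j) := by
      refine Finset.sum_eq_single_of_mem j₀ (Finset.mem_univ j₀) (fun l _ hl => ?_)
      have : N l j = N' l j := by
        by_cases hlk : (l : ℕ) < k
        · by_cases hji : (j : ℕ) = (i₀ : ℕ)
          · have : j = i₀ := Fin.ext hji
            subst this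
            exact step1 l hlk (fun h => hl (Fin.ext h))
          · exact hfree l j hlk (fun h => hl (Fin.ext h)) hjk hji
        · rw [hN l j (by omega), hN' l j (by omega)]
      rw [this, sub_self, mul_zero]
    rw [hsingle] at hsum
    rcases mul_eq_zero.mp hsum with h | h
    · exact absurd h hc
    · exact sub_eq_zero.mp h
  ext i l
  by_cases hil : (i : ℕ) < k ∧ k ≤ (l : ℕ)
  · by_cases hij : (i : ℕ) = (j₀ : ℕ)
    · have : i = j₀ := Fin.ext hij
      subst this
      exact step2 l hil.2
    · by_cases hli : (l : ℕ) = (i₀ : ℕ)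
      · have : l = i₀ := Fin.ext hli
        subst this
        exact step1 i hil.1 hij
      · exact hfree i l hil.1 hij hil.2 hli
  · rw [hN i l hil, hN' i l hil]

private lemma exponent_eq (hn : 2 ≤ n) (hk1 : 1 ≤ k) (hk2 : k ≤ n - 1) :
    (n - k - 1) * (k - 1) = k * (n - k) - (n - 1) := by
  obtain ⟨a, ha⟩ : ∃ a, k = a + 1 := ⟨k - 1, by omega⟩
  obtain ⟨b, hb⟩ : ∃ b, n - k = b + 1 := ⟨n - k - 1, by omega⟩
  have h2 : n - 1 = a + b + 1 := by omega
  rw [hb, h2, ha]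
  have h3 : (a + 1) * (b + 1) = a * b + (a + b + 1) := by ring
  rw [h3, Nat.add_sub_cancel]
  simp [Nat.mul_comm]


end aux

/-- Lemma 5.2(2): if for some `h₀ = 1 + N₀ ∈ 1+E` the blocks `p₁₁(h₀⁻¹ M h₀)`,
`p₂₁(h₀⁻¹ M h₀)`, `p₂₂(h₀⁻¹ M h₀)` are not all zero, then the number of
`h = 1 + N ∈ 1+E` with `p₁₁(h⁻¹ M h) = 0` and `p₂₂(h⁻¹ M h) = 0` is at most
`q^(k(n-k)-(n-1))`.  (Here `h⁻¹ = 1 - N`.) -/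
theorem E_avg_p11_p22 (F : Type) [Field F] [Fintype F] (q : ℕ) (hq : Fintype.card F = q)
    (n k : ℕ) (hn : 2 ≤ n) (hk1 : 1 ≤ k) (hk2 : k ≤ n - 1)
    (M : Matrix (Fin n) (Fin n) F)
    (h0 : ∃ N₀ : Matrix (Fin n) (Fin n) F, memE k N₀ ∧
      ¬((∀ i j : Fin n, (i : ℕ) < k → (j : ℕ) < k →
            ((1 - N₀) * M * (1 + N₀)) i j = 0) ∧
        (∀ i j : Fin n, k ≤ (i : ℕ) → (j : ℕ) < k →
            ((1 - N₀) * M * (1 + N₀)) i j = 0) ∧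
        (∀ i j : Fin n, k ≤ (i : ℕ) → k ≤ (j : ℕ) →
            ((1 - N₀) * M * (1 + N₀)) i j = 0))) :
    Set.ncard {h : Matrix (Fin n) (Fin n) F |
        ∃ N : Matrix (Fin n) (Fin n) F, memE k N ∧ h = 1 + N ∧
          (∀ i j : Fin n, (i : ℕ) < k → (j : ℕ) < k → ((1 - N) * M * h) i j = 0) ∧
          (∀ i j : Fin n, k ≤ (i : ℕ) → k ≤ (j : ℕ) → ((1 - N) * M * h) i j = 0)}
      ≤ q ^ (k * (n - k) - (n - 1)) := by
  classical
  set S : Set (Matrix (Fin n) (Fin n) F) := {h : Matrix (Fin n) (Fin n) F |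
        ∃ N : Matrix (Fin n) (Fin n) F, memE k N ∧ h = 1 + N ∧
          (∀ i j : Fin n, (i : ℕ) < k → (j : ℕ) < k → ((1 - N) * M * h) i j = 0) ∧
          (∀ i j : Fin n, k ≤ (i : ℕ) → k ≤ (j : ℕ) → ((1 - N) * M * h) i j = 0)} with hSdef
  rcases Set.eq_empty_or_nonempty S with hS | ⟨h₁, hh₁⟩
  · rw [hS]; simp
  obtain ⟨N₁, hE₁, hEq₁, hA₁, hB₁⟩ := hh₁
  subst hEq₁
  -- The lower-left block of `M` is nonzero.
  have hC : ∃ i₀ j₀ : Fin n, k ≤ (i₀ : ℕ) ∧ (j₀ : ℕ) < k ∧ M i₀ j₀ ≠ 0 := by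
    by_contra hc
    push_neg at hc
    obtain ⟨N₀, hE₀, hbad⟩ := h0
    -- first: the `11` and `22` blocks of `M` itself vanish
    have hA : ∀ i j : Fin n, (i : ℕ) < k → (j : ℕ) < k → M i j = 0 := by
      intro i j hi hj
      have e := entry_lt M N₁ hE₁ i j hj
      rw [hA₁ i j hi hj] at e
      have hsum : ∑ l, N₁ i l * M l j = 0 :=
        Finset.sum_eq_zero fun l _ => by
          by_cases hlk : k ≤ (l : ℕ)
          · rw [hc l j hlk hj, mul_zero]
          · rw [hE₁ i l (by omega), zero_mul]
      rw [hsum] at e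
      linear_combination -e
    have hB : ∀ i j : Fin n, k ≤ (i : ℕ) → k ≤ (j : ℕ) → M i j = 0 := by
      intro i j hi hj
      have e := entry_ge M N₁ hE₁ i j hi
      rw [hB₁ i j hi hj] at e
      have hsum : ∑ l, M i l * N₁ l j = 0 :=
        Finset.sum_eq_zero fun l _ => by
          by_cases hlk : (l : ℕ) < k
          · rw [hc i l hi hlk, zero_mul]
          · rw [hE₁ l j (by omega), mul_zero]
      rw [hsum] at e
      linear_combination -e
    refine hbad ⟨fun i j hi hj => ?_, fun i j hi hj => ?_, fun i j hi hj => ?_⟩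
    · rw [entry_lt M N₀ hE₀ i j hj, hA i j hi hj]
      have hsum : ∑ l, N₀ i l * M l j = 0 :=
        Finset.sum_eq_zero fun l _ => by
          by_cases hlk : k ≤ (l : ℕ)
          · rw [hc l j hlk hj, mul_zero]
          · rw [hE₀ i l (by omega), zero_mul]
      rw [hsum, sub_zero]
    · rw [entry_lt M N₀ hE₀ i j hj, hc i j hi hj]
      have hsum : ∑ l, N₀ i l * M l j = 0 :=
        Finset.sum_eq_zero fun l _ => by rw [hE₀ i l (by omega), zero_mul]
      rw [hsum, sub_zero]
    · rw [entry_ge M N₀ hE₀ i j hi, hB i j hi hj]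
      have hsum : ∑ l, M i l * N₀ l j = 0 :=
        Finset.sum_eq_zero fun l _ => by
          by_cases hlk : (l : ℕ) < k
          · rw [hc i l hi hlk, zero_mul]
          · rw [hE₀ l j (by omega), mul_zero]
      rw [hsum, add_zero]
  obtain ⟨i₀, j₀, hi₀, hj₀, hc0⟩ := hC
  have hkn : k < n := by omega
  have hkey : ∀ g₁ g₂ : S, (∀ (x : {x : Fin k // x ≠ (⟨(j₀ : ℕ), hj₀⟩ : Fin k)})
      (y : {y : Fin (n - k) // y ≠ (⟨(i₀ : ℕ) - k, by omega⟩ : Fin (n - k))}),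
      (g₁ : Matrix (Fin n) (Fin n) F) ⟨(x.1 : ℕ), lt_trans x.1.2 hkn⟩
        ⟨k + (y.1 : ℕ), by have := y.1.2; omega⟩ =
      (g₂ : Matrix (Fin n) (Fin n) F) ⟨(x.1 : ℕ), lt_trans x.1.2 hkn⟩
        ⟨k + (y.1 : ℕ), by have := y.1.2; omega⟩) →
      g₁ = g₂ := by
    rintro ⟨g₁, hg₁⟩ ⟨g₂, hg₂⟩ hfeq
    obtain ⟨P₁, hP₁, rfl, hP11, hP22⟩ := hg₁
    obtain ⟨P₂, hP₂, rfl, hQ11, hQ22⟩ := hg₂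
    have hfree : ∀ i l : Fin n, (i : ℕ) < k → (i : ℕ) ≠ (j₀ : ℕ) → k ≤ (l : ℕ) →
        (l : ℕ) ≠ (i₀ : ℕ) → P₁ i l = P₂ i l := by
      intro i l hik hij hlk hli
      have hx : ((⟨(i : ℕ), hik⟩ : Fin k)) ≠ (⟨(j₀ : ℕ), hj₀⟩ : Fin k) := by
        intro h
        exact hij (by simpa using h)
      have hy : ((⟨(l : ℕ) - k, by omega⟩ : Fin (n - k))) ≠
          (⟨(i₀ : ℕ) - k, by omega⟩ : Fin (n - k)) := by
        intro h
        have : (l : ℕ) - k = (i₀ : ℕ) - k := by simpa using h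
        omega
      have heq := hfeq ⟨⟨(i : ℕ), hik⟩, hx⟩ ⟨⟨(l : ℕ) - k, by omega⟩, hy⟩
      have hl' : (⟨k + ((l : ℕ) - k), by omega⟩ : Fin n) = l :=
        Fin.ext (by simp only []; omega)
      rw [hl'] at heq
      have hne : i ≠ l := fun h => by
        have := congrArg Fin.val h; omega
      have h1 : ((1 : Matrix (Fin n) (Fin n) F) + P₁) i l = P₁ i l := by
        rw [Matrix.add_apply, Matrix.one_apply_ne hne, zero_add]
      have h2 : ((1 : Matrix (Fin n) (Fin n) F) + P₂) i l = P₂ i l := by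
        rw [Matrix.add_apply, Matrix.one_apply_ne hne, zero_add]
      rw [← h1, ← h2]
      exact heq
    have : P₁ = P₂ := inj_aux M P₁ P₂ hP₁ hP₂ hi₀ hj₀ hc0 hP11 hP22 hQ11 hQ22 hfree
    simp [this]
  calc Set.ncard S = Nat.card S := (Nat.card_coe_set_eq S).symm
    _ ≤ Nat.card ({x : Fin k // x ≠ (⟨(j₀ : ℕ), hj₀⟩ : Fin k)} →
          {y : Fin (n - k) // y ≠ (⟨(i₀ : ℕ) - k, by omega⟩ : Fin (n - k))} → F) :=
        Nat.card_le_card_of_injective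
          (fun h x y => (h : Matrix (Fin n) (Fin n) F) ⟨(x.1 : ℕ), lt_trans x.1.2 hkn⟩
            ⟨k + (y.1 : ℕ), by have := y.1.2; omega⟩)
          (fun g₁ g₂ h => hkey g₁ g₂ (fun x y => congrFun (congrFun h x) y))
    _ = q ^ (k * (n - k) - (n - 1)) := by
        rw [Nat.card_eq_fintype_card, Fintype.card_fun, Fintype.card_fun, hq, ← pow_mul]
        congr 1
        have hcA : Fintype.card {x : Fin k // x ≠ (⟨(j₀ : ℕ), hj₀⟩ : Fin k)} = k - 1 := by
          simp [Ne, Fintype.card_subtype_compl, Fintype.card_subtype_eq]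
        have hcB : Fintype.card {y : Fin (n - k) // y ≠
            (⟨(i₀ : ℕ) - k, by omega⟩ : Fin (n - k))} = n - k - 1 := by
          simp [Ne, Fintype.card_subtype_compl, Fintype.card_subtype_eq]
        rw [hcA, hcB, ← exponent_eq hn hk1 hk2]
end

section
/- Let 𝔽_q be a finite field with q elements, let n ≥ 2 and 1 ≤ k ≤ n−1 be integers, and let M be a nonzero n×n matrix over 𝔽_q. Then #{h ∈ 1+E : p₁₁(h⁻¹Mh) = 0, p₁₂(h⁻¹Mh) = 0 and p₂₂(h⁻¹Mh) = 0} ≤ q^(k(n−k)−(n−1)). -/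
section Aux

variable {n k : ℕ} {F : Type*} [Field F]

/-- `(A * N) i j = 0` whenever `j` is in the first block. -/
lemma mulN_apply_eq_zero {N : Matrix (Fin n) (Fin n) F} (hN : memE k N)
    (A : Matrix (Fin n) (Fin n) F) (i j : Fin n) (hj : (j : ℕ) < k) :
    (A * N) i j = 0 := by
  rw [Matrix.mul_apply]
  exact Finset.sum_eq_zero fun l _ => by rw [hN l j (by omega), mul_zero]

/-- `(N * A) i j = 0` whenever `i` is in the second block. -/
lemma Nmul_apply_eq_zero {N : Matrix (Fin n) (Fin n) F} (hN : memE k N)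
    (A : Matrix (Fin n) (Fin n) F) (i j : Fin n) (hi : k ≤ (i : ℕ)) :
    (N * A) i j = 0 := by
  rw [Matrix.mul_apply]
  exact Finset.sum_eq_zero fun l _ => by rw [hN i l (by omega), zero_mul]

lemma conj_expand (N M : Matrix (Fin n) (Fin n) F) :
    (1 - N) * M * (1 + N) = M + M * N - N * M - N * M * N := by
  noncomm_ring

lemma exp_arith (k n : ℕ) (hk1 : 1 ≤ k) (hk2 : k ≤ n - 1) (hn : 2 ≤ n) :
    (k - 1) * (n - k - 1) = k * (n - k) - (n - 1) := by
  obtain ⟨a, rfl⟩ : ∃ a, k = a + 1 := ⟨k - 1, by omega⟩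
  obtain ⟨b, rfl⟩ : ∃ b, n = a + b + 2 := ⟨n - a - 2, by omega⟩
  have h4 : a + 1 - 1 = a := by omega
  have h5 : a + b + 2 - (a + 1) - 1 = b := by omega
  have h6 : a + b + 2 - (a + 1) = b + 1 := by omega
  have h7 : a + b + 2 - 1 = a + b + 1 := by omega
  rw [h4, h5, h6, h7, show (a + 1) * (b + 1) = a * b + (a + b + 1) from by ring,
    Nat.add_sub_cancel]

end Aux

/-- Lemma 5.2(3): if `M ≠ 0`, then the number of `h = 1 + N ∈ 1+E` with
`p₁₁(h⁻¹ M h) = 0`, `p₁₂(h⁻¹ M h) = 0` and `p₂₂(h⁻¹ M h) = 0` is at most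
`q^(k(n-k)-(n-1))`.  (Here `h⁻¹ = 1 - N`.) -/
theorem E_avg_p11_p12_p22 (F : Type) [Field F] [Fintype F] (q : ℕ)
    (hq : Fintype.card F = q)
    (n k : ℕ) (hn : 2 ≤ n) (hk1 : 1 ≤ k) (hk2 : k ≤ n - 1)
    (M : Matrix (Fin n) (Fin n) F) (hM : M ≠ 0) :
    Set.ncard {h : Matrix (Fin n) (Fin n) F |
        ∃ N : Matrix (Fin n) (Fin n) F, memE k N ∧ h = 1 + N ∧
          (∀ i j : Fin n, (i : ℕ) < k → (j : ℕ) < k → ((1 - N) * M * h) i j = 0) ∧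
          (∀ i j : Fin n, (i : ℕ) < k → k ≤ (j : ℕ) → ((1 - N) * M * h) i j = 0) ∧
          (∀ i j : Fin n, k ≤ (i : ℕ) → k ≤ (j : ℕ) → ((1 - N) * M * h) i j = 0)}
      ≤ q ^ (k * (n - k) - (n - 1)) := by
  classical
  set S := {h : Matrix (Fin n) (Fin n) F |
        ∃ N : Matrix (Fin n) (Fin n) F, memE k N ∧ h = 1 + N ∧
          (∀ i j : Fin n, (i : ℕ) < k → (j : ℕ) < k → ((1 - N) * M * h) i j = 0) ∧
          (∀ i j : Fin n, (i : ℕ) < k → k ≤ (j : ℕ) → ((1 - N) * M * h) i j = 0) ∧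
          (∀ i j : Fin n, k ≤ (i : ℕ) → k ≤ (j : ℕ) → ((1 - N) * M * h) i j = 0)} with hSdef
  -- the two key consequences of the vanishing conditions
  have key1 : ∀ N : Matrix (Fin n) (Fin n) F, memE k N →
      (∀ i j : Fin n, (i : ℕ) < k → (j : ℕ) < k → ((1 - N) * M * (1 + N)) i j = 0) →
      ∀ i j : Fin n, (i : ℕ) < k → (j : ℕ) < k → (N * M) i j = M i j := by
    intro N hN hp i j hi hj
    have h0 := hp i j hi hj
    rw [conj_expand] at h0
    simp only [Matrix.sub_apply, Matrix.add_apply] at h0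
    rw [mulN_apply_eq_zero hN M i j hj, mulN_apply_eq_zero hN (N * M) i j hj] at h0
    linear_combination -h0
  have key2 : ∀ N : Matrix (Fin n) (Fin n) F, memE k N →
      (∀ i j : Fin n, k ≤ (i : ℕ) → k ≤ (j : ℕ) → ((1 - N) * M * (1 + N)) i j = 0) →
      ∀ i j : Fin n, k ≤ (i : ℕ) → k ≤ (j : ℕ) → (M * N) i j = -(M i j) := by
    intro N hN hp i j hi hj
    have h0 := hp i j hi hj
    rw [conj_expand] at h0
    simp only [Matrix.sub_apply, Matrix.add_apply] at h0
    rw [Nmul_apply_eq_zero hN M i j hi,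
      show (N * M * N) i j = (N * (M * N)) i j from by rw [Matrix.mul_assoc],
      Nmul_apply_eq_zero hN (M * N) i j hi] at h0
    linear_combination h0
  rcases Set.eq_empty_or_nonempty S with hSe | ⟨h₀, h₀S⟩
  · rw [hSe, Set.ncard_empty]; exact Nat.zero_le _
  obtain ⟨N₀, hN₀mem, hh₀, hp11₀, hp12₀, hp22₀⟩ := h₀S
  subst hh₀
  -- the bottom-left block of `M` is nonzero
  have hCex : ∃ i0 j0 : Fin n, k ≤ (i0 : ℕ) ∧ (j0 : ℕ) < k ∧ M i0 j0 ≠ 0 := by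
    by_contra hc
    push_neg at hc
    apply hM
    have hA : ∀ i j : Fin n, (i : ℕ) < k → (j : ℕ) < k → M i j = 0 := by
      intro i j hi hj
      rw [← key1 N₀ hN₀mem hp11₀ i j hi hj, Matrix.mul_apply]
      refine Finset.sum_eq_zero fun l _ => ?_
      by_cases hl : (l : ℕ) < k
      · rw [hN₀mem i l (by omega), zero_mul]
      · rw [hc l j (by omega) hj, mul_zero]
    have hD : ∀ i j : Fin n, k ≤ (i : ℕ) → k ≤ (j : ℕ) → M i j = 0 := by
      intro i j hi hj
      have h2 := key2 N₀ hN₀mem hp22₀ i j hi hj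
      have hz : (M * N₀) i j = 0 := by
        rw [Matrix.mul_apply]
        refine Finset.sum_eq_zero fun l _ => ?_
        by_cases hl : (l : ℕ) < k
        · rw [hc i l hi hl, zero_mul]
        · rw [hN₀mem l j (by omega), mul_zero]
      rw [hz] at h2
      linear_combination h2
    have hB : ∀ i j : Fin n, (i : ℕ) < k → k ≤ (j : ℕ) → M i j = 0 := by
      intro i j hi hj
      have h3 := hp12₀ i j hi hj
      rw [conj_expand] at h3
      simp only [Matrix.sub_apply, Matrix.add_apply] at h3
      have e1 : (M * N₀) i j = 0 := by
        rw [Matrix.mul_apply]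
        refine Finset.sum_eq_zero fun l _ => ?_
        by_cases hl : (l : ℕ) < k
        · rw [hA i l hi hl, zero_mul]
        · rw [hN₀mem l j (by omega), mul_zero]
      have e2 : (N₀ * M) i j = 0 := by
        rw [Matrix.mul_apply]
        refine Finset.sum_eq_zero fun l _ => ?_
        by_cases hl : (l : ℕ) < k
        · rw [hN₀mem i l (by omega), zero_mul]
        · rw [hD l j (by omega) hj, mul_zero]
      have e3 : (N₀ * M * N₀) i j = 0 := by
        rw [Matrix.mul_apply]
        refine Finset.sum_eq_zero fun b _ => ?_
        by_cases hb : (b : ℕ) < k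
        · have : (N₀ * M) i b = 0 := by
            rw [Matrix.mul_apply]
            refine Finset.sum_eq_zero fun l _ => ?_
            by_cases hl : (l : ℕ) < k
            · rw [hN₀mem i l (by omega), zero_mul]
            · rw [hc l b (by omega) hb, mul_zero]
          rw [this, zero_mul]
        · rw [hN₀mem b j (by omega), mul_zero]
      rw [e1, e2, e3] at h3
      linear_combination h3
    ext i j
    simp only [Matrix.zero_apply]
    by_cases hi : (i : ℕ) < k <;> by_cases hj : (j : ℕ) < k
    · exact hA i j hi hj
    · exact hB i j hi (by omega)
    · exact hc i j (by omega) hj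
    · exact hD i j (by omega) (by omega)
  obtain ⟨i0, j0, hi0, hj0, hM00⟩ := hCex
  -- the injection into functions on the non-pivot positions
  set f : Matrix (Fin n) (Fin n) F →
      (({i : Fin n // (i : ℕ) < k ∧ i ≠ j0} × {j : Fin n // k ≤ (j : ℕ) ∧ j ≠ i0}) → F) :=
    fun h p => h p.1.1 p.2.1 with hfdef
  have hone : ∀ (N : Matrix (Fin n) (Fin n) F) (i j : Fin n),
      (i : ℕ) < k → k ≤ (j : ℕ) → (1 + N) i j = N i j := by
    intro N i j hi hj
    have hij : i ≠ j := fun h => by omega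
    simp [Matrix.add_apply, Matrix.one_apply_ne hij]
  have hinj : Set.InjOn f S := by
    rintro h₁ ⟨N₁, hN₁mem, rfl, hp11₁, _, hp22₁⟩ h₂ ⟨N₂, hN₂mem, rfl, hp11₂, _, hp22₂⟩ hf
    have hnp : ∀ i j : Fin n, (i : ℕ) < k → k ≤ (j : ℕ) → i ≠ j0 → j ≠ i0 →
        N₁ i j = N₂ i j := by
      intro i j hi hj hij0 hji0
      have := congrFun hf (⟨i, hi, hij0⟩, ⟨j, hj, hji0⟩)
      simpa only [hfdef, hone N₁ i j hi hj, hone N₂ i j hi hj] using this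
    have hrow : ∀ j : Fin n, k ≤ (j : ℕ) → j ≠ i0 → N₁ j0 j = N₂ j0 j := by
      intro j hj hji0
      have e₁ := key2 N₁ hN₁mem hp22₁ i0 j hi0 hj
      have e₂ := key2 N₂ hN₂mem hp22₂ i0 j hi0 hj
      have hsum : (M * N₁) i0 j = (M * N₂) i0 j := by rw [e₁, e₂]
      rw [Matrix.mul_apply, Matrix.mul_apply] at hsum
      have t1 := Finset.add_sum_erase Finset.univ (fun l => M i0 l * N₁ l j)
        (Finset.mem_univ j0)
      have t2 := Finset.add_sum_erase Finset.univ (fun l => M i0 l * N₂ l j)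
        (Finset.mem_univ j0)
      have ht : ∑ l ∈ Finset.univ.erase j0, M i0 l * N₁ l j
          = ∑ l ∈ Finset.univ.erase j0, M i0 l * N₂ l j := by
        refine Finset.sum_congr rfl fun l hl => ?_
        have hlne : l ≠ j0 := (Finset.mem_erase.mp hl).1
        by_cases hlk : (l : ℕ) < k
        · rw [hnp l j hlk hj hlne hji0]
        · rw [hN₁mem l j (by omega), hN₂mem l j (by omega)]
      rw [← t1, ← t2, ht] at hsum
      exact mul_left_cancel₀ hM00 (add_right_cancel hsum)
    have hcol : ∀ i : Fin n, (i : ℕ) < k → N₁ i i0 = N₂ i i0 := by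
      intro i hi
      have e₁ := key1 N₁ hN₁mem hp11₁ i j0 hi hj0
      have e₂ := key1 N₂ hN₂mem hp11₂ i j0 hi hj0
      have hsum : (N₁ * M) i j0 = (N₂ * M) i j0 := by rw [e₁, e₂]
      rw [Matrix.mul_apply, Matrix.mul_apply] at hsum
      have t1 := Finset.add_sum_erase Finset.univ (fun l => N₁ i l * M l j0)
        (Finset.mem_univ i0)
      have t2 := Finset.add_sum_erase Finset.univ (fun l => N₂ i l * M l j0)
        (Finset.mem_univ i0)
      have ht : ∑ l ∈ Finset.univ.erase i0, N₁ i l * M l j0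
          = ∑ l ∈ Finset.univ.erase i0, N₂ i l * M l j0 := by
        refine Finset.sum_congr rfl fun l hl => ?_
        have hlne : l ≠ i0 := (Finset.mem_erase.mp hl).1
        by_cases hlk : k ≤ (l : ℕ)
        · by_cases hij0 : i = j0
          · subst hij0; rw [hrow l hlk hlne]
          · rw [hnp i l hi hlk hij0 hlne]
        · rw [hN₁mem i l (by omega), hN₂mem i l (by omega)]
      rw [← t1, ← t2, ht] at hsum
      exact mul_right_cancel₀ hM00 (add_right_cancel hsum)
    have hN : N₁ = N₂ := by
      ext i j
      by_cases hi : (i : ℕ) < k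
      · by_cases hj : k ≤ (j : ℕ)
        · by_cases hji : j = i0
          · subst hji; exact hcol i hi
          · by_cases hij : i = j0
            · subst hij; exact hrow j hj hji
            · exact hnp i j hi hj hij hji
        · rw [hN₁mem i j (by omega), hN₂mem i j (by omega)]
      · rw [hN₁mem i j (by omega), hN₂mem i j (by omega)]
    rw [hN]
  -- cardinality bound
  have base1 : Fintype.card {i : Fin n // (i : ℕ) < k} = k := by
    have e : {i : Fin n // (i : ℕ) < k} ≃ Fin k :=
      { toFun := fun x => ⟨x.1, x.2⟩
        invFun := fun x => ⟨⟨x.1, by omega⟩, x.2⟩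
        left_inv := fun x => Subtype.ext (Fin.ext rfl)
        right_inv := fun x => rfl }
    rw [Fintype.card_congr e, Fintype.card_fin]
  have base2 : Fintype.card {j : Fin n // k ≤ (j : ℕ)} = n - k := by
    have e : {j : Fin n // k ≤ (j : ℕ)} ≃ Fin (n - k) :=
      { toFun := fun x => ⟨(x.1 : ℕ) - k, by have := x.1.2; have := x.2; omega⟩
        invFun := fun x => ⟨⟨(x.1 : ℕ) + k, by have := x.2; omega⟩, Nat.le_add_left _ _⟩
        left_inv := fun x => Subtype.ext (Fin.ext (by have := x.2; simp; omega))
        right_inv := fun x => Fin.ext (by simp) }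
    rw [Fintype.card_congr e, Fintype.card_fin]
  have hcard1 : Fintype.card {i : Fin n // (i : ℕ) < k ∧ i ≠ j0} = k - 1 := by
    rw [Fintype.card_subtype]
    rw [show (Finset.univ.filter fun i : Fin n => (i : ℕ) < k ∧ i ≠ j0)
        = ((Finset.univ.filter (fun i : Fin n => (i : ℕ) < k)).erase j0) from by
      ext i
      simp only [Finset.mem_filter, Finset.mem_erase, Finset.mem_univ, true_and]
      tauto]
    have hmemf : j0 ∈ Finset.univ.filter (fun i : Fin n => (i : ℕ) < k) :=
      Finset.mem_filter.mpr ⟨Finset.mem_univ _, hj0⟩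
    rw [Finset.card_erase_of_mem hmemf, ← Fintype.card_subtype, base1]
  have hcard2 : Fintype.card {j : Fin n // k ≤ (j : ℕ) ∧ j ≠ i0} = n - k - 1 := by
    rw [Fintype.card_subtype]
    rw [show (Finset.univ.filter fun j : Fin n => k ≤ (j : ℕ) ∧ j ≠ i0)
        = ((Finset.univ.filter (fun j : Fin n => k ≤ (j : ℕ))).erase i0) from by
      ext j
      simp only [Finset.mem_filter, Finset.mem_erase, Finset.mem_univ, true_and]
      tauto]
    have hmemf : i0 ∈ Finset.univ.filter (fun j : Fin n => k ≤ (j : ℕ)) :=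
      Finset.mem_filter.mpr ⟨Finset.mem_univ _, hi0⟩
    rw [Finset.card_erase_of_mem hmemf, ← Fintype.card_subtype, base2]
  have hT : Fintype.card
      (({i : Fin n // (i : ℕ) < k ∧ i ≠ j0} × {j : Fin n // k ≤ (j : ℕ) ∧ j ≠ i0}) → F)
      = q ^ ((k - 1) * (n - k - 1)) := by
    rw [Fintype.card_fun, hq, Fintype.card_prod, hcard1, hcard2]
  calc Set.ncard S
      ≤ (Set.univ : Set (({i : Fin n // (i : ℕ) < k ∧ i ≠ j0}
          × {j : Fin n // k ≤ (j : ℕ) ∧ j ≠ i0}) → F)).ncard :=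
        Set.ncard_le_ncard_of_injOn f (fun a _ => Set.mem_univ _) hinj Set.finite_univ
    _ = Fintype.card (({i : Fin n // (i : ℕ) < k ∧ i ≠ j0}
          × {j : Fin n // k ≤ (j : ℕ) ∧ j ≠ i0}) → F) := by
        rw [Set.ncard_univ, Nat.card_eq_fintype_card]
    _ = q ^ ((k - 1) * (n - k - 1)) := hT
    _ = q ^ (k * (n - k) - (n - 1)) := by rw [exp_arith k n hk1 hk2 hn]
end

section
/- Let n ≥ 2 and 1 ≤ k ≤ n−1 be integers, and let F be a field whose characteristic is either zero or at least n. If x = (x₁,…,x_n) ∈ Fⁿ is a nonzero vector, then there exists a subset I ⊆ {1,2,…,n} with #I = k such that Σ_{i∈I} x_i ≠ 0. -/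
/-- Lemma 5.3: over a field of characteristic zero or of characteristic at least `n`,
for every nonzero vector `x ∈ Fⁿ` and every `1 ≤ k ≤ n-1` there is a `k`-element subset
`I ⊆ {1,…,n}` whose coordinates sum to a nonzero value. -/
theorem exists_subset_sum_ne_zero (n k : ℕ) (hn : 2 ≤ n) (hk1 : 1 ≤ k) (hk2 : k ≤ n - 1)
    (F : Type*) [Field F] (hchar : ringChar F = 0 ∨ n ≤ ringChar F)
    (x : Fin n → F) (hx : x ≠ 0) :
    ∃ I : Finset (Fin n), I.card = k ∧ ∑ i ∈ I, x i ≠ 0 := by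
  by_contra h
  push_neg at h
  obtain ⟨i0, hi0⟩ : ∃ i, x i ≠ 0 := by
    by_contra hc; push_neg at hc; exact hx (funext hc)
  have hall : ∀ j, x j = x i0 := by
    intro j
    by_cases hij : j = i0
    · rw [hij]
    · have hsub : ({j} : Finset (Fin n)) ⊆ Finset.univ.erase i0 := by
        simp [Finset.mem_erase, hij]
      have hcard : (Finset.univ.erase i0 : Finset (Fin n)).card = n - 1 := by
        simp
      obtain ⟨I, hjI, hIe, hIcard⟩ := Finset.exists_subsuperset_card_eq hsub
        (by simpa using hk1) (by rw [hcard]; exact hk2)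
      have hjmem : j ∈ I := hjI (Finset.mem_singleton_self j)
      have hi0not : i0 ∉ I := fun hmem => (Finset.mem_erase.1 (hIe hmem)).1 rfl
      have hi0not' : i0 ∉ I.erase j := fun hmem => hi0not (Finset.mem_of_mem_erase hmem)
      have h1 := h I hIcard
      have hcard2 : (insert i0 (I.erase j)).card = k := by
        rw [Finset.card_insert_of_notMem hi0not', Finset.card_erase_of_mem hjmem, hIcard]
        omega
      have h2 := h (insert i0 (I.erase j)) hcard2
      rw [← Finset.add_sum_erase I x hjmem] at h1
      rw [Finset.sum_insert hi0not'] at h2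
      have := h1.trans h2.symm
      linear_combination this
  obtain ⟨I0, hI0sub, hI0card⟩ := Finset.exists_subset_card_eq (s := (Finset.univ : Finset (Fin n))) (n := k)
    (by simp; omega)
  have hsum := h I0 hI0card
  have : ∑ i ∈ I0, x i = (k : F) * x i0 := by
    rw [Finset.sum_congr rfl (fun i _ => hall i), Finset.sum_const, hI0card, nsmul_eq_mul]
  rw [this] at hsum
  have hk0 : (k : F) = 0 := by
    rcases mul_eq_zero.1 hsum with h' | h'
    · exact h'
    · exact absurd h' hi0
  have hdvd : ringChar F ∣ k := (ringChar.spec F k).1 hk0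
  rcases hchar with h0 | hge
  · rw [h0] at hdvd; omega
  · have := Nat.le_of_dvd (by omega) hdvd
    omega
end

section
/- For every integer n ≥ 2 there exists a constant C = C(n) > 0 such that for every finite field 𝔽_q with q elements whose characteristic is at least n, every nonzero n×n matrix M over 𝔽_q, and every integer 1 ≤ k ≤ n−1: #{g ∈ GL_n(𝔽_q) : p₁₁(g⁻¹Mg) = 0 and p₂₁(g⁻¹Mg) = 0} ≤ C · q^(−k) · #GL_n(𝔽_q). -/
/-- Auxiliary: the kernel of a nonzero matrix, as a set of vectors, has at most
`q ^ (n-1)` elements. -/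
theorem aux_ker_card (n : ℕ) (F : Type) [Field F] [Fintype F]
    (M : Matrix (Fin n) (Fin n) F) (hM : M ≠ 0) :
    Nat.card {v : Fin n → F // M.mulVec v = 0} ≤ Fintype.card F ^ (n - 1) := by
  classical
  have hker : LinearMap.ker M.mulVecLin ≠ ⊤ := by
    intro h
    apply hM
    ext i j
    have h0 : M.mulVec (Pi.single j 1) = 0 := by
      have h1 : Pi.single j (1 : F) ∈ LinearMap.ker M.mulVecLin := h ▸ Submodule.mem_top
      simpa [Matrix.mulVecLin_apply] using h1
    have := congrFun h0 i
    simpa [Matrix.mulVec_single] using this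
  have hlt : Module.finrank F (LinearMap.ker M.mulVecLin) < n := by
    have := Submodule.finrank_lt (K := F) (V := Fin n → F) hker
    simpa [Module.finrank_fintype_fun_eq_card] using this
  have hcard : Nat.card (LinearMap.ker M.mulVecLin) =
      Fintype.card F ^ Module.finrank F (LinearMap.ker M.mulVecLin) := by
    rw [Nat.card_eq_fintype_card]
    exact Module.card_eq_pow_finrank
  have hEquiv : {v : Fin n → F // M.mulVec v = 0} ≃ LinearMap.ker M.mulVecLin :=
    Equiv.subtypeEquivRight (fun v => by simp [LinearMap.mem_ker, Matrix.mulVecLin_apply])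
  rw [Nat.card_congr hEquiv, hcard]
  exact Nat.pow_le_pow_right Fintype.card_pos (by omega)

/-- Lemma 5.4(1): there is `C = C(n) > 0` such that, for every finite field `F` with `q`
elements of characteristic at least `n`, every nonzero `M` and every `1 ≤ k ≤ n-1`, the
number of `g ∈ GL_n(F)` with `p₁₁(g⁻¹ M g) = 0` and `p₂₁(g⁻¹ M g) = 0` is at most
`C q^(-k) #GL_n(F)`. -/
theorem GL_avg_p11_p21 (n : ℕ) (hn : 2 ≤ n) :
    ∃ C : ℝ, 0 < C ∧
      ∀ (F : Type) [Field F] [Fintype F] (q : ℕ), Fintype.card F = q →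
        n ≤ ringChar F →
        ∀ M : Matrix (Fin n) (Fin n) F, M ≠ 0 →
        ∀ k : ℕ, 1 ≤ k → k ≤ n - 1 →
        (Set.ncard {g : GL (Fin n) F |
            ∀ i j : Fin n, (j : ℕ) < k →
              (((g⁻¹ : GL (Fin n) F) : Matrix (Fin n) (Fin n) F) * M *
                ((g : GL (Fin n) F) : Matrix (Fin n) (Fin n) F)) i j = 0} : ℝ)
          ≤ C * (q : ℝ) ^ (-(k : ℤ)) * (Nat.card (GL (Fin n) F) : ℝ) := by
  classical
  refine ⟨2 ^ n, by positivity, ?_⟩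
  intro F _ _ q hq _ M hM k hk1 hk2
  subst hq
  have hq2 : 2 ≤ Fintype.card F := Fintype.one_lt_card
  set q := Fintype.card F with hqdef
  set S : Set (GL (Fin n) F) := {g : GL (Fin n) F |
      ∀ i j : Fin n, (j : ℕ) < k →
        (((g⁻¹ : GL (Fin n) F) : Matrix (Fin n) (Fin n) F) * M *
          ((g : GL (Fin n) F) : Matrix (Fin n) (Fin n) F)) i j = 0} with hS
  -- key: columns j < k of g lie in the kernel of M
  have hcol : ∀ g ∈ S, ∀ j : Fin n, (j : ℕ) < k →
      M.mulVec (fun i => ((g : GL (Fin n) F) : Matrix (Fin n) (Fin n) F) i j) = 0 := by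
    intro g hg j hj
    set A : Matrix (Fin n) (Fin n) F :=
      ((g⁻¹ : GL (Fin n) F) : Matrix (Fin n) (Fin n) F) * M *
        ((g : GL (Fin n) F) : Matrix (Fin n) (Fin n) F) with hA
    have hgA : ((g : GL (Fin n) F) : Matrix (Fin n) (Fin n) F) * A =
        M * ((g : GL (Fin n) F) : Matrix (Fin n) (Fin n) F) := by
      rw [hA, ← Matrix.mul_assoc, ← Matrix.mul_assoc, Units.mul_inv, Matrix.one_mul]
    ext i
    have h0 : (M * ((g : GL (Fin n) F) : Matrix (Fin n) (Fin n) F)) i j = 0 := by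
      rw [← hgA, Matrix.mul_apply]
      exact Finset.sum_eq_zero (fun l _ => by rw [hA, hg l j hj, mul_zero])
    simpa [Matrix.mulVec, Matrix.mul_apply, dotProduct] using h0
  have hkn : k < n := by omega
  -- the counting bound in ℕ
  have hcount : S.ncard ≤ q ^ (n * n - k) := by
    have hinj : ∃ f : S → (∀ j : Fin n, {v : Fin n → F // (j : ℕ) < k → M.mulVec v = 0}),
        Function.Injective f := by
      refine ⟨fun g j => ⟨fun i => ((g.1 : GL (Fin n) F) : Matrix (Fin n) (Fin n) F) i j,
        fun hj => hcol g.1 g.2 j hj⟩, ?_⟩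
      intro g g' h
      apply Subtype.ext
      apply Units.ext
      ext i j
      exact congrFun (congrArg Subtype.val (congrFun h j)) i
    obtain ⟨f, hf⟩ := hinj
    have h1 : S.ncard ≤
        Nat.card (∀ j : Fin n, {v : Fin n → F // (j : ℕ) < k → M.mulVec v = 0}) := by
      rw [← Nat.card_coe_set_eq]
      exact Nat.card_le_card_of_injective f hf
    refine h1.trans ?_
    rw [Nat.card_eq_fintype_card, Fintype.card_pi]
    have hfac : ∀ j : Fin n,
        Fintype.card {v : Fin n → F // (j : ℕ) < k → M.mulVec v = 0} ≤
          if (j : ℕ) < k then q ^ (n - 1) else q ^ n := by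
      intro j
      by_cases hj : (j : ℕ) < k
      · rw [if_pos hj]
        have heq : Fintype.card {v : Fin n → F // (j : ℕ) < k → M.mulVec v = 0} =
            Nat.card {v : Fin n → F // M.mulVec v = 0} := by
          rw [Nat.card_eq_fintype_card]
          exact Fintype.card_congr (Equiv.subtypeEquivRight (fun v => by simp [hj]))
        rw [heq]
        exact aux_ker_card n F M hM
      · rw [if_neg hj]
        have heq : Fintype.card {v : Fin n → F // (j : ℕ) < k → M.mulVec v = 0} =
            Fintype.card (Fin n → F) :=
          Fintype.card_congr (Equiv.subtypeUnivEquiv (fun v hc => absurd hc hj))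
        rw [heq, Fintype.card_fun]
        simp [hqdef]
    have hfiltcard : (Finset.univ.filter fun j : Fin n => (j : ℕ) < k).card = k := by
      have hfe : (Finset.univ.filter fun j : Fin n => (j : ℕ) < k) =
          Finset.Iio (⟨k, hkn⟩ : Fin n) := by
        ext j
        simp [Fin.lt_def]
      rw [hfe, Fin.card_Iio]
    calc ∏ j : Fin n, Fintype.card {v : Fin n → F // (j : ℕ) < k → M.mulVec v = 0}
        ≤ ∏ j : Fin n, (if (j : ℕ) < k then q ^ (n - 1) else q ^ n) :=
          Finset.prod_le_prod (fun _ _ => Nat.zero_le _) (fun j _ => hfac j)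
      _ = (q ^ (n - 1)) ^ k * (q ^ n) ^ (n - k) := by
          rw [Finset.prod_ite, Finset.prod_const, Finset.prod_const, hfiltcard]
          congr 2
          have := Finset.card_filter_add_card_filter_not
            (s := (Finset.univ : Finset (Fin n))) (p := fun j : Fin n => (j : ℕ) < k)
          simp only [Finset.card_univ, Fintype.card_fin] at this
          omega
      _ = q ^ (n * n - k) := by
          rw [← pow_mul, ← pow_mul, ← pow_add]
          congr 1
          have h1 : k ≤ n * k := Nat.le_mul_of_pos_left k (by omega)
          have h2 : n * k ≤ n * n := Nat.mul_le_mul_left n (by omega)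
          have h3 : (n - 1) * k = n * k - k := by rw [Nat.sub_mul, one_mul]
          have h4 : n * (n - k) = n * n - n * k := Nat.mul_sub n n k
          rw [h3, h4]
          omega
  -- lower bound for the cardinality of GL
  have hGL : q ^ (n * n) ≤ 2 ^ n * Nat.card (GL (Fin n) F) := by
    rw [Matrix.card_GL_field]
    calc q ^ (n * n) = ∏ _i : Fin n, q ^ n := by
          rw [Finset.prod_const, Finset.card_univ, Fintype.card_fin, ← pow_mul]
      _ ≤ ∏ i : Fin n, 2 * (q ^ n - q ^ (i : ℕ)) := by
          refine Finset.prod_le_prod (fun _ _ => Nat.zero_le _) (fun i _ => ?_)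
          have ha : 2 * q ^ (i : ℕ) ≤ q ^ n := by
            calc 2 * q ^ (i : ℕ) ≤ q * q ^ (i : ℕ) :=
                  Nat.mul_le_mul_right _ hq2
              _ = q ^ ((i : ℕ) + 1) := by rw [pow_succ, mul_comm]
              _ ≤ q ^ n := Nat.pow_le_pow_right (by omega) i.isLt
          have hb : q ^ (i : ℕ) ≤ q ^ n := Nat.pow_le_pow_right (by omega) i.isLt.le
          omega
      _ = 2 ^ n * ∏ i : Fin n, (q ^ n - q ^ (i : ℕ)) := by
          rw [Finset.prod_mul_distrib, Finset.prod_const, Finset.card_univ, Fintype.card_fin]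
  -- combine in ℕ
  have hnat : S.ncard * q ^ k ≤ 2 ^ n * Nat.card (GL (Fin n) F) := by
    calc S.ncard * q ^ k ≤ q ^ (n * n - k) * q ^ k := Nat.mul_le_mul_right _ hcount
      _ = q ^ (n * n) := by
          rw [← pow_add]
          congr 1
          have : n ≤ n * n := Nat.le_mul_of_pos_left n (by omega)
          omega
      _ ≤ 2 ^ n * Nat.card (GL (Fin n) F) := hGL
  -- conclude over ℝ
  have hqpos : (0 : ℝ) < (q : ℝ) ^ k := by
    have : (0 : ℝ) < (q : ℝ) := by exact_mod_cast (by omega : 0 < q)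
    positivity
  have hrw : (2 : ℝ) ^ n * (q : ℝ) ^ (-(k : ℤ)) * (Nat.card (GL (Fin n) F) : ℝ) =
      ((2 : ℝ) ^ n * (Nat.card (GL (Fin n) F) : ℝ)) / (q : ℝ) ^ k := by
    rw [zpow_neg, zpow_natCast]
    ring
  rw [hrw, le_div_iff₀ hqpos]
  exact_mod_cast hnat
end

section
/- For every integer n ≥ 2 there exists a constant C = C(n) > 0 such that for every finite field 𝔽_q with q elements whose characteristic is at least n, every nonzero n×n matrix M over 𝔽_q, and every integer 1 ≤ k ≤ n−1: #{g ∈ GL_n(𝔽_q) : p₂₂(g⁻¹Mg) = 0} ≤ C · q^(−(n−k)) · #GL_n(𝔽_q). -/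
open Matrix

namespace GLavgAux

variable {n : ℕ} {F : Type} [Field F] [Fintype F]

/-- column `j` of the matrix of `g`. -/
def col (g : GL (Fin n) F) (j : Fin n) : Fin n → F :=
  fun i => (g : Matrix (Fin n) (Fin n) F) i j

/-- span of the first `k` columns of `g`. -/
def Wspan (k : ℕ) (g : GL (Fin n) F) : Submodule F (Fin n → F) :=
  Submodule.span F (Set.range fun l : {l : Fin n // (l : ℕ) < k} => col g l.1)

lemma key (k : ℕ) (M : Matrix (Fin n) (Fin n) F) (g : GL (Fin n) F)
    (hg : ∀ i j : Fin n, k ≤ (i : ℕ) → k ≤ (j : ℕ) →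
      (((g⁻¹ : GL (Fin n) F) : Matrix (Fin n) (Fin n) F) * M *
        ((g : GL (Fin n) F) : Matrix (Fin n) (Fin n) F)) i j = 0)
    (j : Fin n) (hj : k ≤ (j : ℕ)) :
    M.mulVec (col g j) ∈ Wspan k g := by
  set A : Matrix (Fin n) (Fin n) F := (g : Matrix (Fin n) (Fin n) F) with hA
  set B : Matrix (Fin n) (Fin n) F := ((g⁻¹ : GL (Fin n) F) : Matrix (Fin n) (Fin n) F) with hB
  have hAB : A * B = 1 := g.mul_inv
  have hMA : M * A = A * (B * M * A) := by
    calc M * A = 1 * (M * A) := by rw [one_mul]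
    _ = (A * B) * (M * A) := by rw [hAB]
    _ = A * (B * M * A) := by rw [Matrix.mul_assoc]; rw [Matrix.mul_assoc B M A]
  have hcol : M.mulVec (col g j) = ∑ l : Fin n, (B * M * A) l j • col g l := by
    funext i
    have h1 : (M * A) i j = (A * (B * M * A)) i j := by rw [← hMA]
    simp only [Matrix.mul_apply] at h1
    simp only [Matrix.mulVec, dotProduct, col, Finset.sum_apply, Pi.smul_apply, smul_eq_mul]
    rw [h1]
    exact Finset.sum_congr rfl fun l _ => mul_comm _ _
  rw [hcol]
  apply Submodule.sum_mem
  intro l _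
  by_cases hl : (l : ℕ) < k
  · exact Submodule.smul_mem _ _ (Submodule.subset_span ⟨⟨l, hl⟩, rfl⟩)
  · rw [hg l j (le_of_not_gt hl) hj, zero_smul]
    exact Submodule.zero_mem _

lemma exists_inj_fin {α : Type*} [Finite α] {m : ℕ} (h : Nat.card α ≤ m) :
    ∃ f : α → Fin m, Function.Injective f := by
  cases nonempty_fintype α
  rw [Nat.card_eq_fintype_card] at h
  exact ⟨fun a => Fin.castLE h (Fintype.equivFin α a), fun a b hab => by
    have := Fin.castLE_injective h hab
    exact (Fintype.equivFin α).injective this⟩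

lemma exists_injOn_fin {α : Type*} {s : Set α} [Finite ↥s] {m : ℕ} (hm : 0 < m)
    (h : Nat.card ↥s ≤ m) : ∃ f : α → Fin m, Set.InjOn f s := by
  obtain ⟨f0, hf0⟩ := exists_inj_fin h
  classical
  refine ⟨fun a => if ha : a ∈ s then f0 ⟨a, ha⟩ else ⟨0, hm⟩, ?_⟩
  intro a ha b hb hab
  simp only [dif_pos ha, dif_pos hb] at hab
  exact congrArg Subtype.val (hf0 hab)

def eLT (n k : ℕ) (hk : k ≤ n) : {l : Fin n // (l : ℕ) < k} ≃ Fin k where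
  toFun l := ⟨l.1, l.2⟩
  invFun l := ⟨⟨l.1, lt_of_lt_of_le l.2 hk⟩, l.2⟩
  left_inv l := Subtype.ext (Fin.ext rfl)
  right_inv l := Fin.ext rfl

def eGE (n k : ℕ) : {l : Fin n // k ≤ (l : ℕ)} ≃ Fin (n - k) where
  toFun l := ⟨l.1 - k, by have := l.1.isLt; have := l.2; omega⟩
  invFun m := ⟨⟨m.1 + k, by have := m.isLt; omega⟩, by simp⟩
  left_inv l := Subtype.ext (Fin.ext (by have := l.2; simp; omega))
  right_inv m := Fin.ext (by simp)

/-- embedding of `Fin (n-1)` into `Fin n` skipping `i`. -/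
def skip {n : ℕ} (hn : 1 ≤ n) (i : Fin n) (m : Fin (n - 1)) : Fin n :=
  ⟨if (m : ℕ) < (i : ℕ) then m else m + 1, by have := m.isLt; have := i.isLt; split <;> omega⟩

lemma skip_surj {n : ℕ} (hn : 1 ≤ n) (i : Fin n) (j : Fin n) (hj : j ≠ i) :
    ∃ m : Fin (n - 1), skip hn i m = j := by
  have hji : (j : ℕ) ≠ (i : ℕ) := fun h => hj (Fin.ext h)
  by_cases h : (j : ℕ) < (i : ℕ)
  · exact ⟨⟨j, by have := i.isLt; omega⟩, Fin.ext (by simp [skip, h])⟩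
  · refine ⟨⟨(j : ℕ) - 1, by have := j.isLt; omega⟩, Fin.ext ?_⟩
    simp only [skip]
    have : ¬ ((j : ℕ) - 1 < (i : ℕ)) := by omega
    simp [this]
    omega

end GLavgAux

open GLavgAux

/-- Lemma 5.4(6): there is `C = C(n) > 0` such that, for every finite field `F` with `q`
elements of characteristic at least `n`, every nonzero `M` and every `1 ≤ k ≤ n-1`, the
number of `g ∈ GL_n(F)` with `p₂₂(g⁻¹ M g) = 0` is at most `C q^(-(n-k)) #GL_n(F)`. -/
theorem GL_avg_p22 (n : ℕ) (hn : 2 ≤ n) :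
    ∃ C : ℝ, 0 < C ∧
      ∀ (F : Type) [Field F] [Fintype F] (q : ℕ), Fintype.card F = q →
        n ≤ ringChar F →
        ∀ M : Matrix (Fin n) (Fin n) F, M ≠ 0 →
        ∀ k : ℕ, 1 ≤ k → k ≤ n - 1 →
        (Set.ncard {g : GL (Fin n) F |
            ∀ i j : Fin n, k ≤ (i : ℕ) → k ≤ (j : ℕ) →
              (((g⁻¹ : GL (Fin n) F) : Matrix (Fin n) (Fin n) F) * M *
                ((g : GL (Fin n) F) : Matrix (Fin n) (Fin n) F)) i j = 0} : ℝ)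
          ≤ C * (q : ℝ) ^ (-((n : ℤ) - (k : ℤ))) * (Nat.card (GL (Fin n) F) : ℝ) := by
  classical
  have hC : (0 : ℝ) < (n : ℝ) * 2 ^ n := by
    have : (0:ℝ) < (n:ℝ) := by exact_mod_cast (by omega : 0 < n)
    positivity
  refine ⟨(n : ℝ) * 2 ^ n, hC, ?_⟩
  intro F _ _ q hq _ M hM k hk1 hk2
  have hq2 : 2 ≤ q := by rw [← hq]; exact Fintype.one_lt_card
  have hkn : k ≤ n := by omega
  have hn1 : 1 ≤ n := by omega
  set m := n - k with hmdef
  have hm : k + m = n := by omega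
  have hm1 : 1 ≤ m := by omega
  haveI : Finite (GL (Fin n) F) := inferInstanceAs (Finite (Matrix (Fin n) (Fin n) F)ˣ)
  -- a vector not killed by M
  obtain ⟨i₀, j₀, hM0⟩ : ∃ i j, M i j ≠ 0 := by
    by_contra h
    push_neg at h
    exact hM (by ext i j; simpa using h i j)
  set u₀ : Fin n → F := Pi.single j₀ 1 with hu₀
  set v : Fin n → F := M.mulVec u₀ with hv
  have hv0 : v ≠ 0 := by
    intro h
    apply hM0
    have := congrFun h i₀
    simpa [hv, hu₀, Matrix.mulVec_single] using this
  set S : Set (GL (Fin n) F) := {g : GL (Fin n) F |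
      ∀ i j : Fin n, k ≤ (i : ℕ) → k ≤ (j : ℕ) →
        (((g⁻¹ : GL (Fin n) F) : Matrix (Fin n) (Fin n) F) * M *
          ((g : GL (Fin n) F) : Matrix (Fin n) (Fin n) F)) i j = 0} with hSdef
  set SA : Set (GL (Fin n) F) := {g | g ∈ S ∧ v ∉ Wspan k g} with hSA
  set SB : Set (GL (Fin n) F) := {g | g ∈ S ∧ v ∈ Wspan k g} with hSB
  have hsplit : S ⊆ SA ∪ SB := by
    intro g hg
    by_cases h : v ∈ Wspan k g
    · exact Or.inr ⟨hg, h⟩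
    · exact Or.inl ⟨hg, h⟩
  have hcard_split : S.ncard ≤ SA.ncard + SB.ncard :=
    le_trans (Set.ncard_le_ncard hsplit (Set.toFinite _)) (Set.ncard_union_le _ _)
  -- the preimage submodule
  have hqpow : 0 < q ^ (n - 1) := pow_pos (by omega) _
  have hPcard : ∀ g : GL (Fin n) F, v ∉ Wspan k g →
      Nat.card ↥((Submodule.comap (Matrix.mulVecLin M) (Wspan k g) : Submodule F (Fin n → F)) :
        Set (Fin n → F)) ≤ q ^ (n - 1) := by
    intro g hgv
    set P : Submodule F (Fin n → F) := Submodule.comap (Matrix.mulVecLin M) (Wspan k g) with hP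
    have hPne : P ≠ ⊤ := by
      intro h
      apply hgv
      have hu : u₀ ∈ P := h ▸ Submodule.mem_top
      have := Submodule.mem_comap.mp hu
      rwa [Matrix.mulVecLin_apply] at this
    have hlt : Module.finrank F ↥P < n := by
      have h2 := Submodule.finrank_lt (K := F) (V := Fin n → F) hPne
      rwa [Module.finrank_fintype_fun_eq_card, Fintype.card_fin] at h2
    letI : Fintype ↥P := Fintype.ofFinite _
    have hcard : Nat.card ↥(P : Set (Fin n → F)) = Fintype.card F ^ Module.finrank F ↥P := by
      rw [Nat.card_eq_fintype_card]
      exact Module.card_eq_pow_finrank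
    rw [hcard, hq]
    exact Nat.pow_le_pow_right (by omega) (by omega)
  -- choice of injections on submodules
  have hι : ∃ ι : Submodule F (Fin n → F) → (Fin n → F) → Fin (q ^ (n - 1)),
      ∀ P : Submodule F (Fin n → F), Nat.card ↥((P : Set (Fin n → F))) ≤ q ^ (n - 1) →
        Set.InjOn (ι P) (P : Set (Fin n → F)) := by
    refine ⟨fun P => if h : Nat.card ↥((P : Set (Fin n → F))) ≤ q ^ (n - 1) then
        (exists_injOn_fin hqpow h).choose else fun _ => ⟨0, hqpow⟩, fun P h => ?_⟩
    simp only [dif_pos h]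
    exact (exists_injOn_fin hqpow h).choose_spec
  obtain ⟨ι, hι⟩ := hι
  -- cardinalities of index subtypes
  have c1 : Fintype.card {l : Fin n // (l : ℕ) < k} = k := by
    rw [Fintype.card_congr (eLT n k hkn), Fintype.card_fin]
  have c2 : Fintype.card {l : Fin n // k ≤ (l : ℕ)} = m := by
    rw [Fintype.card_congr (eGE n k), Fintype.card_fin]
  have c3 : Fintype.card (Fin n → F) = q ^ n := by
    rw [Fintype.card_fun, hq, Fintype.card_fin]
  -- Case A bound
  have hA_bound : SA.ncard ≤ (q ^ n) ^ k * (q ^ (n - 1)) ^ m := by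
    rw [← Nat.card_coe_set_eq]
    have hfA : ∃ fA : ↥SA → ({l : Fin n // (l : ℕ) < k} → (Fin n → F)) ×
        ({l : Fin n // k ≤ (l : ℕ)} → Fin (q ^ (n - 1))), Function.Injective fA := by
      refine ⟨fun g => ⟨fun l => GLavgAux.col g.1 l.1,
        fun j => ι (Submodule.comap (Matrix.mulVecLin M) (Wspan k g.1)) (GLavgAux.col g.1 j.1)⟩, ?_⟩
      intro x y hxy
      have h1 : (fun l : {l : Fin n // (l : ℕ) < k} => GLavgAux.col x.1 l.1)
          = fun l => GLavgAux.col y.1 l.1 := congrArg Prod.fst hxy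
      have hW : Wspan k x.1 = Wspan k y.1 := by
        unfold GLavgAux.Wspan
        rw [h1]
      have hcols1 : ∀ l : Fin n, (l : ℕ) < k → GLavgAux.col x.1 l = GLavgAux.col y.1 l :=
        fun l hl => congrFun h1 ⟨l, hl⟩
      have h2 := congrArg Prod.snd hxy
      have hcols2 : ∀ j : Fin n, k ≤ (j : ℕ) → GLavgAux.col x.1 j = GLavgAux.col y.1 j := by
        intro j hj
        have hxm : GLavgAux.col x.1 j ∈ (Submodule.comap (Matrix.mulVecLin M) (Wspan k x.1) :
            Set (Fin n → F)) := by
          simp only [SetLike.mem_coe, Submodule.mem_comap, Matrix.mulVecLin_apply]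
          exact key k M x.1 x.2.1 j hj
        have hym : GLavgAux.col y.1 j ∈ (Submodule.comap (Matrix.mulVecLin M) (Wspan k x.1) :
            Set (Fin n → F)) := by
          rw [hW]
          simp only [SetLike.mem_coe, Submodule.mem_comap, Matrix.mulVecLin_apply]
          exact key k M y.1 y.2.1 j hj
        have heq := congrFun h2 ⟨j, hj⟩
        simp only at heq
        rw [← hW] at heq
        exact hι _ (hPcard x.1 x.2.2) hxm hym heq
      apply Subtype.ext
      apply Units.ext
      ext i j
      rcases lt_or_ge (j : ℕ) k with h | h
      · exact congrFun (hcols1 j h) i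
      · exact congrFun (hcols2 j h) i
    obtain ⟨fA, hfA⟩ := hfA
    calc Nat.card ↥SA ≤ Nat.card (({l : Fin n // (l : ℕ) < k} → (Fin n → F)) ×
        ({l : Fin n // k ≤ (l : ℕ)} → Fin (q ^ (n - 1)))) :=
          Nat.card_le_card_of_injective fA hfA
    _ = (q ^ n) ^ k * (q ^ (n - 1)) ^ m := by
        simp only [Nat.card_eq_fintype_card, Fintype.card_prod, Fintype.card_fun, c1, c2,
          Fintype.card_fin, hq]
  -- Case B bound
  have hB_bound : SB.ncard ≤ q ^ k * (k * (q ^ n) ^ (n - 1)) := by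
    rw [← Nat.card_coe_set_eq]
    have hrep : ∀ g : ↥SB, ∃ c : {l : Fin n // (l : ℕ) < k} → F,
        ∑ l, c l • GLavgAux.col g.1 l.1 = v := by
      intro g
      exact (Submodule.mem_span_range_iff_exists_fun F).mp g.2.2
    choose a ha using hrep
    have hnz : ∀ g : ↥SB, ∃ l, a g l ≠ 0 := by
      intro g
      by_contra h
      push_neg at h
      apply hv0
      rw [← ha g]
      exact Finset.sum_eq_zero fun l _ => by rw [h l, zero_smul]
    choose istar histar using hnz
    have hfB : ∃ fB : ↥SB → ({l : Fin n // (l : ℕ) < k} → F) ×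
        ({l : Fin n // (l : ℕ) < k} × (Fin (n - 1) → (Fin n → F))), Function.Injective fB := by
      refine ⟨fun g => ⟨a g, istar g, fun mm => GLavgAux.col g.1 (skip hn1 (istar g).1 mm)⟩, ?_⟩
      intro x y hxy
      have h1 : a x = a y := congrArg Prod.fst hxy
      have h2 : istar x = istar y := congrArg (fun p => p.2.1) hxy
      have h3 : (fun mm => GLavgAux.col x.1 (skip hn1 (istar x).1 mm))
          = fun mm => GLavgAux.col y.1 (skip hn1 (istar y).1 mm) := congrArg (fun p => p.2.2) hxy
      rw [← h2] at h3
      have hcols : ∀ j : Fin n, j ≠ (istar x).1 → GLavgAux.col x.1 j = GLavgAux.col y.1 j := by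
        intro j hj
        obtain ⟨mm, hmm⟩ := skip_surj hn1 (istar x).1 j hj
        have := congrFun h3 mm
        rwa [hmm] at this
      have hcol_i : GLavgAux.col x.1 (istar x).1 = GLavgAux.col y.1 (istar x).1 := by
        have hx := ha x
        have hy := ha y
        rw [← h1] at hy
        have hsum : ∑ l, a x l • GLavgAux.col x.1 l.1 = ∑ l, a x l • GLavgAux.col y.1 l.1 := by rw [hx, hy]
        rw [← Finset.add_sum_erase _ _ (Finset.mem_univ (istar x)),
          ← Finset.add_sum_erase _ _ (Finset.mem_univ (istar x))] at hsum
        have herase : ∑ l ∈ Finset.univ.erase (istar x), a x l • GLavgAux.col x.1 l.1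
            = ∑ l ∈ Finset.univ.erase (istar x), a x l • GLavgAux.col y.1 l.1 := by
          refine Finset.sum_congr rfl fun l hl => ?_
          have hlne : l ≠ istar x := Finset.ne_of_mem_erase hl
          rw [hcols l.1 (fun hh => hlne (Subtype.ext hh))]
        rw [herase] at hsum
        have := add_right_cancel hsum
        exact smul_right_injective (Fin n → F) (histar x) this
      apply Subtype.ext
      apply Units.ext
      ext i j
      rcases eq_or_ne j (istar x).1 with h | h
      · rw [h]; exact congrFun hcol_i i
      · exact congrFun (hcols j h) i
    obtain ⟨fB, hfB⟩ := hfB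
    calc Nat.card ↥SB ≤ Nat.card (({l : Fin n // (l : ℕ) < k} → F) ×
        ({l : Fin n // (l : ℕ) < k} × (Fin (n - 1) → (Fin n → F)))) :=
          Nat.card_le_card_of_injective fB hfB
    _ = q ^ k * (k * (q ^ n) ^ (n - 1)) := by
        simp only [Nat.card_eq_fintype_card, Fintype.card_prod, Fintype.card_fun, c1,
          Fintype.card_fin, hq]
  -- combine the two bounds
  have e1 : ((q ^ n) ^ k * (q ^ (n - 1)) ^ m) * q ^ m = q ^ (n * n) := by
    rw [mul_assoc, ← mul_pow, ← pow_succ, show n - 1 + 1 = n from by omega, ← pow_add, hm,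
      ← pow_mul]
  have e2 : (q ^ k * (k * (q ^ n) ^ (n - 1))) * q ^ m = k * q ^ (n * n) := by
    calc (q ^ k * (k * (q ^ n) ^ (n - 1))) * q ^ m
        = k * ((q ^ n) ^ (n - 1) * (q ^ k * q ^ m)) := by ring
    _ = k * ((q ^ n) ^ (n - 1) * q ^ n) := by rw [← pow_add, hm]
    _ = k * (q ^ n) ^ (n - 1 + 1) := by rw [pow_succ]
    _ = k * q ^ (n * n) := by rw [show n - 1 + 1 = n from by omega, ← pow_mul]
  have hmain : S.ncard * q ^ m ≤ n * q ^ (n * n) := by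
    calc S.ncard * q ^ m ≤ ((q ^ n) ^ k * (q ^ (n - 1)) ^ m + q ^ k * (k * (q ^ n) ^ (n - 1)))
        * q ^ m := Nat.mul_le_mul_right _ (le_trans hcard_split (add_le_add hA_bound hB_bound))
    _ = q ^ (n * n) + k * q ^ (n * n) := by rw [add_mul, e1, e2]
    _ = (1 + k) * q ^ (n * n) := by ring
    _ ≤ n * q ^ (n * n) := Nat.mul_le_mul_right _ (by omega)
  -- lower bound on the cardinality of GL
  have hGL : q ^ (n * n) ≤ 2 ^ n * Nat.card (GL (Fin n) F) := by
    rw [Matrix.card_GL_field, hq]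
    have h2n : (2 : ℕ) ^ n = ∏ _i : Fin n, 2 := by
      rw [Finset.prod_const, Finset.card_univ, Fintype.card_fin]
    have hqn : q ^ (n * n) = ∏ _i : Fin n, q ^ n := by
      rw [Finset.prod_const, Finset.card_univ, Fintype.card_fin, ← pow_mul]
    rw [h2n, hqn, ← Finset.prod_mul_distrib]
    refine Finset.prod_le_prod' fun i _ => ?_
    have hi : (i : ℕ) ≤ n - 1 := by have := i.isLt; omega
    have h1 : q ^ (i : ℕ) ≤ q ^ (n - 1) := Nat.pow_le_pow_right (by omega) hi
    have h2 : 2 * q ^ (n - 1) ≤ q ^ n := by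
      calc 2 * q ^ (n - 1) ≤ q * q ^ (n - 1) := Nat.mul_le_mul_right _ hq2
      _ = q ^ n := by rw [← pow_succ', show n - 1 + 1 = n from by omega]
    omega
  -- final assembly over ℝ
  have hnat : S.ncard * q ^ m ≤ n * 2 ^ n * Nat.card (GL (Fin n) F) := by
    calc S.ncard * q ^ m ≤ n * q ^ (n * n) := hmain
    _ ≤ n * (2 ^ n * Nat.card (GL (Fin n) F)) := Nat.mul_le_mul_left _ hGL
    _ = n * 2 ^ n * Nat.card (GL (Fin n) F) := by ring
  have hR : (S.ncard : ℝ) * (q : ℝ) ^ m ≤ (n : ℝ) * 2 ^ n * (Nat.card (GL (Fin n) F) : ℝ) := by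
    exact_mod_cast hnat
  have hqm : (0 : ℝ) < (q : ℝ) ^ m := by
    have : (0 : ℝ) < (q : ℝ) := by exact_mod_cast (by omega : 0 < q)
    positivity
  rw [show -((n : ℤ) - (k : ℤ)) = -(m : ℤ) from by omega, _root_.zpow_neg, zpow_natCast]
  rw [show (n : ℝ) * 2 ^ n * ((q : ℝ) ^ m)⁻¹ * (Nat.card (GL (Fin n) F) : ℝ)
    = ((n : ℝ) * 2 ^ n * (Nat.card (GL (Fin n) F) : ℝ)) / (q : ℝ) ^ m from by ring]
  exact (le_div_iff₀ hqm).mpr hR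
end

section
/- For every integer n ≥ 2 there exists a constant C = C(n) > 0 such that for every finite field 𝔽_q with q elements whose characteristic is at least n, every nonzero n×n matrix M over 𝔽_q, and every integer 1 ≤ k ≤ n−1: #{g ∈ GL_n(𝔽_q) : tr(p₁₁(g⁻¹Mg)) = 0} ≤ C · q^(−1) · #GL_n(𝔽_q). -/
open Matrix Finset
set_option linter.unusedSectionVars false
set_option maxHeartbeats 1000000

section
variable {n : ℕ} {F : Type} [Field F] [Fintype F]

private lemma my_ncard_biUnion_le {α ι : Type*} [Finite α] (s : Finset ι) (f : ι → Set α) :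
    (⋃ i ∈ s, f i).ncard ≤ ∑ i ∈ s, (f i).ncard := by
  classical
  induction s using Finset.induction_on with
  | empty => simp
  | @insert a s ha ih =>
    rw [Finset.sum_insert ha, Finset.set_biUnion_insert]
    exact le_trans (Set.ncard_union_le _ _) (add_le_add le_rfl ih)

def tGL (i j : Fin n) (hij : i ≠ j) (x : F) : GL (Fin n) F :=
  ⟨transvection i j x, transvection i j (-x),
    by rw [transvection_mul_transvection_same i j hij, add_neg_cancel, transvection_zero],
    by rw [transvection_mul_transvection_same i j hij, neg_add_cancel, transvection_zero]⟩

lemma tGL_mul (i j : Fin n) (hij : i ≠ j) (x y : F) :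
    tGL i j hij x * tGL i j hij y = tGL i j hij (x + y) :=
  Units.ext (transvection_mul_transvection_same i j hij x y)

lemma tGL_zero (i j : Fin n) (hij : i ≠ j) : tGL i j hij 0 = (1 : GL (Fin n) F) :=
  Units.ext (transvection_zero i j)

lemma tGL_inv (i j : Fin n) (hij : i ≠ j) (x : F) :
    (tGL i j hij x)⁻¹ = tGL i j hij (-x) := by
  apply inv_eq_of_mul_eq_one_right
  rw [tGL_mul, add_neg_cancel, tGL_zero]

variable (M : Matrix (Fin n) (Fin n) F)

def NN (g : GL (Fin n) F) : Matrix (Fin n) (Fin n) F :=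
  ((g⁻¹ : GL (Fin n) F) : Matrix (Fin n) (Fin n) F) * M *
    ((g : GL (Fin n) F) : Matrix (Fin n) (Fin n) F)

lemma NN_mul_tGL (g : GL (Fin n) F) (i j : Fin n) (hij : i ≠ j) (x : F) :
    NN M (g * tGL i j hij x) =
      transvection i j (-x) * NN M g * transvection i j x := by
  have h1 : (((g * tGL i j hij x)⁻¹ : GL (Fin n) F) : Matrix (Fin n) (Fin n) F)
      = transvection i j (-x) * ((g⁻¹ : GL (Fin n) F) : Matrix (Fin n) (Fin n) F) := by
    rw [_root_.mul_inv_rev, Units.val_mul, tGL_inv]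
    rfl
  have h2 : (((g * tGL i j hij x) : GL (Fin n) F) : Matrix (Fin n) (Fin n) F)
      = ((g : GL (Fin n) F) : Matrix (Fin n) (Fin n) F) * transvection i j x := by
    rw [Units.val_mul]; rfl
  simp only [NN, h1, h2, Matrix.mul_assoc]

lemma NN_ne_zero (hM : M ≠ 0) (g : GL (Fin n) F) : NN M g ≠ 0 := by
  intro h
  apply hM
  have := congrArg (fun X => ((g : GL (Fin n) F) : Matrix (Fin n) (Fin n) F) * X *
      ((g⁻¹ : GL (Fin n) F) : Matrix (Fin n) (Fin n) F)) h
  simp only [NN, Matrix.mul_zero, Matrix.zero_mul] at this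
  rw [← this]
  simp only [← Matrix.mul_assoc]
  rw [← Units.val_mul, mul_inv_cancel, Units.val_one, Matrix.one_mul,
    Matrix.mul_assoc, ← Units.val_mul, mul_inv_cancel, Units.val_one, Matrix.mul_one]

variable (k : ℕ)

def ff (g : GL (Fin n) F) : F :=
  ∑ i ∈ Finset.univ.filter (fun i : Fin n => (i : ℕ) < k), NN M g i i

lemma ff_mul_A (g : GL (Fin n) F) (i j : Fin n) (hij : i ≠ j)
    (hi : (i : ℕ) < k) (hj : k ≤ (j : ℕ)) (x : F) :
    ff M k (g * tGL i j hij x) = ff M k g - x * NN M g j i := by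
  unfold ff
  rw [NN_mul_tGL]
  have key : ∀ a ∈ Finset.univ.filter (fun a : Fin n => (a : ℕ) < k),
      (transvection i j (-x) * NN M g * transvection i j x) a a
        = NN M g a a - (if a = i then x * NN M g j a else 0) := by
    intro a ha
    have hak : (a : ℕ) < k := by simpa using ha
    have haj : a ≠ j := by intro h; rw [h] at hak; omega
    rw [mul_transvection_apply_of_ne i j a a haj]
    by_cases hai : a = i
    · subst hai
      rw [transvection_mul_apply_same]
      simp only [if_true]
      ring
    · rw [transvection_mul_apply_of_ne i j a a hai]
      simp [hai]
  rw [Finset.sum_congr rfl key, Finset.sum_sub_distrib, Finset.sum_ite_eq']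
  simp [hi]

lemma ff_mul_B (g : GL (Fin n) F) (i j : Fin n) (hji : j ≠ i)
    (hi : (i : ℕ) < k) (hj : k ≤ (j : ℕ)) (x : F) :
    ff M k (g * tGL j i hji x) = ff M k g + x * NN M g i j := by
  unfold ff
  rw [NN_mul_tGL]
  have key : ∀ a ∈ Finset.univ.filter (fun a : Fin n => (a : ℕ) < k),
      (transvection j i (-x) * NN M g * transvection j i x) a a
        = NN M g a a + (if a = i then x * NN M g i j else 0) := by
    intro a ha
    have hak : (a : ℕ) < k := by simpa using ha
    have haj : a ≠ j := by intro h; rw [h] at hak; omega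
    by_cases hai : a = i
    · subst hai
      rw [mul_transvection_apply_same, transvection_mul_apply_of_ne j a a a haj,
        transvection_mul_apply_of_ne j a a j haj]
      simp
    · rw [mul_transvection_apply_of_ne j i a a hai,
        transvection_mul_apply_of_ne j i a a haj]
      simp [hai]
  rw [Finset.sum_congr rfl key, Finset.sum_add_distrib, Finset.sum_ite_eq']
  simp [hi]

lemma card_key (S : Set (GL (Fin n) F)) (i j : Fin n) (hij : i ≠ j)
    (hS : ∀ g ∈ S, ∀ x : F, g * tGL i j hij x ∈ S → x = 0) :
    S.ncard * Fintype.card F ≤ Nat.card (GL (Fin n) F) := by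
  have hinj : Function.Injective
      (fun p : S × F => (p.1 : GL (Fin n) F) * tGL i j hij p.2) := by
    rintro ⟨⟨g, hg⟩, x⟩ ⟨⟨g', hg'⟩, x'⟩ h
    simp only at h
    have hmem : g * tGL i j hij (x - x') = g' := by
      calc g * tGL i j hij (x - x')
          = g * tGL i j hij x * tGL i j hij (-x') := by
            rw [mul_assoc, tGL_mul]
            norm_num [sub_eq_add_neg]
        _ = g' * tGL i j hij x' * tGL i j hij (-x') := by rw [h]
        _ = g' := by rw [mul_assoc, tGL_mul, add_neg_cancel, tGL_zero, mul_one]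
    have hx : x - x' = 0 := hS g hg (x - x') (by rw [hmem]; exact hg')
    have hxx : x = x' := by linear_combination hx
    subst hxx
    have hgg : g = g' := by
      have := mul_right_cancel h
      exact this
    simp [hgg]
  calc S.ncard * Fintype.card F = Nat.card (S × F) := by
        rw [Nat.card_prod, Nat.card_coe_set_eq, Nat.card_eq_fintype_card]
    _ ≤ Nat.card (GL (Fin n) F) := Nat.card_le_card_of_injective _ hinj

lemma filter_lt_card (hk : k < n) :
    (Finset.univ.filter (fun i : Fin n => (i : ℕ) < k)).card = k := by
  have : Finset.univ.filter (fun i : Fin n => (i : ℕ) < k) = Finset.Iio (⟨k, hk⟩ : Fin n) := by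
    ext a
    simp [Fin.lt_def]
  rw [this, Fin.card_Iio]

lemma exists_good (hk1 : 1 ≤ k) (hkn : k < n) (hchar : n ≤ ringChar F)
    (N : Matrix (Fin n) (Fin n) F) (hN : N ≠ 0)
    (hbd : ∀ a b : Fin n, ((a : ℕ) < k → k ≤ (b : ℕ) → N a b = 0) ∧
      (k ≤ (a : ℕ) → (b : ℕ) < k → N a b = 0))
    (htr : ∑ a ∈ Finset.univ.filter (fun a : Fin n => (a : ℕ) < k), N a a = 0) :
    ∃ i j a b : Fin n, (i : ℕ) < k ∧ k ≤ (j : ℕ) ∧ (a : ℕ) < k ∧ k ≤ (b : ℕ) ∧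
      ((transvection i j (-(1:F)) * N * transvection i j 1 : Matrix (Fin n) (Fin n) F)) a b ≠ 0 := by
  by_contra hcon
  push_neg at hcon
  have entry : ∀ i j a b : Fin n, (i : ℕ) < k → k ≤ (j : ℕ) → (a : ℕ) < k → k ≤ (b : ℕ) →
      ((transvection i j (-(1:F)) * N * transvection i j 1 : Matrix (Fin n) (Fin n) F)) a b
        = (if b = j then (if a = i then N i i - N j j else N a i)
            else (if a = i then -(N j b) else 0)) := by
    intro i j a b hi hj ha hb
    have hNab : N a b = 0 := (hbd a b).1 ha hb
    have hNaj : N a j = 0 := (hbd a j).1 ha hj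
    have hNji : N j i = 0 := (hbd j i).2 hj hi
    by_cases hbj : b = j
    · subst hbj
      rw [mul_transvection_apply_same]
      by_cases hai : a = i
      · subst hai
        rw [transvection_mul_apply_same, transvection_mul_apply_same]
        simp [hNab, hNji]
        ring
      · rw [transvection_mul_apply_of_ne i b a b hai, transvection_mul_apply_of_ne i b a i hai]
        simp [hNab, hai]
    · rw [mul_transvection_apply_of_ne i j a b hbj]
      by_cases hai : a = i
      · subst hai
        rw [transvection_mul_apply_same]
        simp [hNab, hbj]
      · rw [transvection_mul_apply_of_ne i j a b hai]
        simp [hNab, hbj, hai]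
  set j0 : Fin n := ⟨k, hkn⟩ with hj0
  set i0 : Fin n := ⟨0, by omega⟩ with hi0
  have hj0v : k ≤ (j0 : ℕ) := le_refl k
  have hi0v : (i0 : ℕ) < k := hk1
  have hoff1 : ∀ a i : Fin n, (a : ℕ) < k → (i : ℕ) < k → a ≠ i → N a i = 0 := by
    intro a i ha hi hai
    have h := hcon i j0 a j0 hi hj0v ha hj0v
    rw [entry i j0 a j0 hi hj0v ha hj0v] at h
    simpa [hai] using h
  have hoff2 : ∀ j b : Fin n, k ≤ (j : ℕ) → k ≤ (b : ℕ) → j ≠ b → N j b = 0 := by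
    intro j b hj hb hjb
    have h := hcon i0 j i0 b hi0v hj hi0v hb
    rw [entry i0 j i0 b hi0v hj hi0v hb] at h
    have hbj : b ≠ j := fun hh => hjb hh.symm
    simpa [hbj] using h
  have hdiag : ∀ i j : Fin n, (i : ℕ) < k → k ≤ (j : ℕ) → N i i = N j j := by
    intro i j hi hj
    have h := hcon i j i j hi hj hi hj
    rw [entry i j i j hi hj hi hj] at h
    simpa [sub_eq_zero] using h
  have hsc : ∀ a b : Fin n, N a b = if a = b then N j0 j0 else 0 := by
    intro a b
    by_cases hab : a = b
    · subst hab
      rw [if_pos rfl]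
      by_cases ha : (a : ℕ) < k
      · exact hdiag a j0 ha hj0v
      · rw [← hdiag i0 a hi0v (by omega), hdiag i0 j0 hi0v hj0v]
    · simp only [if_neg hab]
      by_cases ha : (a : ℕ) < k <;> by_cases hb : (b : ℕ) < k
      · exact hoff1 a b ha hb hab
      · exact (hbd a b).1 ha (by omega)
      · exact (hbd a b).2 (by omega) hb
      · exact hoff2 a b (by omega) (by omega) hab
  have hlam : N j0 j0 = 0 := by
    have hsum : ∑ a ∈ Finset.univ.filter (fun a : Fin n => (a : ℕ) < k), N a a
        = (k : F) * N j0 j0 := by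
      have hcongr : ∀ a ∈ Finset.univ.filter (fun a : Fin n => (a : ℕ) < k),
          N a a = N j0 j0 := fun a _ => by rw [hsc a a, if_pos rfl]
      rw [Finset.sum_congr rfl hcongr, Finset.sum_const, filter_lt_card k hkn, nsmul_eq_mul]
    rw [hsum] at htr
    have hkF : (k : F) ≠ 0 := by
      intro h
      have hdvd : ringChar F ∣ k := (ringChar.spec F k).mp h
      have := Nat.le_of_dvd (by omega) hdvd
      omega
    exact (mul_eq_zero.mp htr).resolve_left hkF
  apply hN
  ext a b
  rw [hsc a b, hlam]
  simp

end

/-- Lemma 5.4(7): there is `C = C(n) > 0` such that, for every finite field `F` with `q`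
elements of characteristic at least `n`, every nonzero `M` and every `1 ≤ k ≤ n-1`, the
number of `g ∈ GL_n(F)` with `tr(p₁₁(g⁻¹ M g)) = 0` is at most `C q^(-1) #GL_n(F)`. -/
theorem GL_avg_trace_p11 (n : ℕ) (hn : 2 ≤ n) :
    ∃ C : ℝ, 0 < C ∧
      ∀ (F : Type) [Field F] [Fintype F] (q : ℕ), Fintype.card F = q →
        n ≤ ringChar F →
        ∀ M : Matrix (Fin n) (Fin n) F, M ≠ 0 →
        ∀ k : ℕ, 1 ≤ k → k ≤ n - 1 →
        (Set.ncard {g : GL (Fin n) F |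
            ∑ i ∈ Finset.univ.filter (fun i : Fin n => (i : ℕ) < k),
              (((g⁻¹ : GL (Fin n) F) : Matrix (Fin n) (Fin n) F) * M *
                ((g : GL (Fin n) F) : Matrix (Fin n) (Fin n) F)) i i = 0} : ℝ)
          ≤ C * (q : ℝ) ^ (-1 : ℤ) * (Nat.card (GL (Fin n) F) : ℝ) := by
  classical
  refine ⟨(n : ℝ)^4 + 2*(n : ℝ)^2 + 1, by positivity, ?_⟩
  intro F _ _ q hq hchar M hM k hk1 hkn
  have hkn' : k < n := by omega
  have hq1 : 1 ≤ q := by rw [← hq]; exact Fintype.card_pos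
  -- abbreviations
  set pairs : Finset (Fin n × Fin n) :=
    Finset.univ.filter (fun p : Fin n × Fin n => (p.1 : ℕ) < k ∧ k ≤ (p.2 : ℕ)) with hpairs
  set A : Fin n × Fin n → Set (GL (Fin n) F) :=
    fun p => {g | ff M k g = 0 ∧ NN M g p.2 p.1 ≠ 0} with hA
  set B : Fin n × Fin n → Set (GL (Fin n) F) :=
    fun p => {g | ff M k g = 0 ∧ NN M g p.1 p.2 ≠ 0} with hB
  set U : Set (GL (Fin n) F) := ⋃ p ∈ pairs, B p with hU
  set D : Set (GL (Fin n) F) := {g | ff M k g = 0 ∧ ∀ a b : Fin n,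
      ((a : ℕ) < k → k ≤ (b : ℕ) → NN M g a b = 0) ∧
      (k ≤ (a : ℕ) → (b : ℕ) < k → NN M g a b = 0)} with hD
  have hZ : {g : GL (Fin n) F |
      ∑ i ∈ Finset.univ.filter (fun i : Fin n => (i : ℕ) < k),
        (((g⁻¹ : GL (Fin n) F) : Matrix (Fin n) (Fin n) F) * M *
          ((g : GL (Fin n) F) : Matrix (Fin n) (Fin n) F)) i i = 0}
      = {g : GL (Fin n) F | ff M k g = 0} := rfl
  -- covering
  have hcover : {g : GL (Fin n) F | ff M k g = 0} ⊆ ((⋃ p ∈ pairs, A p) ∪ U) ∪ D := by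
    intro g hg
    by_cases hE : ∃ a b : Fin n, ((a : ℕ) < k ∧ k ≤ (b : ℕ) ∧ NN M g a b ≠ 0) ∨
        (k ≤ (a : ℕ) ∧ (b : ℕ) < k ∧ NN M g a b ≠ 0)
    · obtain ⟨a, b, hab⟩ := hE
      rcases hab with h | h
      · refine Or.inl (Or.inr (Set.mem_biUnion (x := (a, b)) ?_ ?_))
        · exact (by simp [hpairs, h.1, h.2.1] : (a, b) ∈ pairs)
        · exact ⟨hg, h.2.2⟩
      · refine Or.inl (Or.inl (Set.mem_biUnion (x := (b, a)) ?_ ?_))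
        · exact (by simp [hpairs, h.1, h.2.1] : (b, a) ∈ pairs)
        · exact ⟨hg, h.2.2⟩
    · push_neg at hE
      exact Or.inr ⟨hg, fun a b => ⟨(hE a b).1, (hE a b).2⟩⟩
  -- counting A and B
  have hAcard : ∀ p ∈ pairs, (A p).ncard * q ≤ Nat.card (GL (Fin n) F) := by
    intro p hp
    have hp' : (p.1 : ℕ) < k ∧ k ≤ (p.2 : ℕ) := by simpa [hpairs] using hp
    have hij : p.1 ≠ p.2 := by
      intro h; rw [h] at hp'; omega
    rw [← hq]
    refine card_key (A p) p.1 p.2 hij ?_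
    intro g hg x hgx
    have h1 : ff M k g = 0 := hg.1
    have h2 : ff M k (g * tGL p.1 p.2 hij x) = 0 := hgx.1
    rw [ff_mul_A M k g p.1 p.2 hij hp'.1 hp'.2 x, h1, zero_sub, neg_eq_zero] at h2
    exact (mul_eq_zero.mp h2).resolve_right hg.2
  have hBcard : ∀ p ∈ pairs, (B p).ncard * q ≤ Nat.card (GL (Fin n) F) := by
    intro p hp
    have hp' : (p.1 : ℕ) < k ∧ k ≤ (p.2 : ℕ) := by simpa [hpairs] using hp
    have hji : p.2 ≠ p.1 := by
      intro h; rw [h] at hp'; omega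
    rw [← hq]
    refine card_key (B p) p.2 p.1 hji ?_
    intro g hg x hgx
    have h1 : ff M k g = 0 := hg.1
    have h2 : ff M k (g * tGL p.2 p.1 hji x) = 0 := hgx.1
    rw [ff_mul_B M k g p.1 p.2 hji hp'.1 hp'.2 x, h1, zero_add] at h2
    exact (mul_eq_zero.mp h2).resolve_right hg.2
  -- counting D
  set t' : Fin n × Fin n → GL (Fin n) F :=
    fun p => if h : p.1 ≠ p.2 then tGL p.1 p.2 h 1 else 1 with ht'
  have hDsub : D ⊆ ⋃ p ∈ pairs, (fun g => g * (t' p)⁻¹) '' U := by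
    intro g hg
    obtain ⟨hg1, hg2⟩ := hg
    obtain ⟨i, j, a, b, hi, hj, ha, hb, hne⟩ :=
      exists_good k hk1 hkn' hchar (NN M g) (NN_ne_zero M hM g) hg2 hg1
    have hij : i ≠ j := by intro h; rw [h] at hi; omega
    have ht'p : t' (i, j) = tGL i j hij 1 := by
      rw [ht']
      simp [hij]
    refine Set.mem_biUnion (x := (i, j)) ((by simp [hpairs, hi, hj] : (i, j) ∈ pairs)) ?_
    refine ⟨g * tGL i j hij 1, ?_, ?_⟩
    · -- membership in U via B (a,b)
      refine Set.mem_biUnion (x := (a, b)) ((by simp [hpairs, ha, hb] : (a, b) ∈ pairs)) ?_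
      constructor
      · rw [ff_mul_A M k g i j hij hi hj 1, hg1, (hg2 j i).2 hj hi]
        ring
      · rw [NN_mul_tGL M g i j hij 1]
        exact hne
    · rw [ht'p]
      simp [mul_assoc]
  have hDcard : D.ncard ≤ pairs.card * U.ncard := by
    calc D.ncard ≤ (⋃ p ∈ pairs, (fun g => g * (t' p)⁻¹) '' U).ncard :=
          Set.ncard_le_ncard hDsub (Set.toFinite _)
      _ ≤ ∑ p ∈ pairs, ((fun g => g * (t' p)⁻¹) '' U).ncard := my_ncard_biUnion_le _ _
      _ ≤ ∑ _p ∈ pairs, U.ncard := Finset.sum_le_sum (fun p _ => Set.ncard_image_le (Set.toFinite _))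
      _ = pairs.card * U.ncard := by rw [Finset.sum_const, smul_eq_mul]
  -- real arithmetic
  have hq0 : (0 : ℝ) < (q : ℝ) := by exact_mod_cast hq1
  set R : ℝ := (q : ℝ)⁻¹ * (Nat.card (GL (Fin n) F) : ℝ) with hR
  have hR0 : 0 ≤ R := by positivity
  have key : ∀ S : Set (GL (Fin n) F), S.ncard * q ≤ Nat.card (GL (Fin n) F) →
      (S.ncard : ℝ) ≤ R := by
    intro S hS
    rw [hR, inv_mul_eq_div, le_div_iff₀ hq0]
    exact_mod_cast hS
  have hUcard : (U.ncard : ℝ) ≤ (pairs.card : ℝ) * R := by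
    calc (U.ncard : ℝ) ≤ ∑ p ∈ pairs, ((B p).ncard : ℝ) := by
          exact_mod_cast my_ncard_biUnion_le pairs B
      _ ≤ ∑ _p ∈ pairs, R := Finset.sum_le_sum (fun p hp => key _ (hBcard p hp))
      _ = (pairs.card : ℝ) * R := by rw [Finset.sum_const, nsmul_eq_mul]
  have hAcard' : ((⋃ p ∈ pairs, A p).ncard : ℝ) ≤ (pairs.card : ℝ) * R := by
    calc ((⋃ p ∈ pairs, A p).ncard : ℝ) ≤ ∑ p ∈ pairs, ((A p).ncard : ℝ) := by
          exact_mod_cast my_ncard_biUnion_le pairs A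
      _ ≤ ∑ _p ∈ pairs, R := Finset.sum_le_sum (fun p hp => key _ (hAcard p hp))
      _ = (pairs.card : ℝ) * R := by rw [Finset.sum_const, nsmul_eq_mul]
  have hDcard' : (D.ncard : ℝ) ≤ (pairs.card : ℝ) * ((pairs.card : ℝ) * R) := by
    calc (D.ncard : ℝ) ≤ ((pairs.card * U.ncard : ℕ) : ℝ) := by exact_mod_cast hDcard
      _ = (pairs.card : ℝ) * (U.ncard : ℝ) := by push_cast; ring
      _ ≤ (pairs.card : ℝ) * ((pairs.card : ℝ) * R) := by
          apply mul_le_mul_of_nonneg_left hUcard (by positivity)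
  have hpc : (pairs.card : ℝ) ≤ (n : ℝ)^2 := by
    have h1 : pairs.card ≤ n * n := by
      calc pairs.card ≤ (Finset.univ : Finset (Fin n × Fin n)).card := Finset.card_filter_le _ _
        _ = n * n := by simp
    have := (Nat.cast_le (α := ℝ)).mpr h1
    push_cast at this
    nlinarith
  have hmain : ({g : GL (Fin n) F | ff M k g = 0}.ncard : ℝ)
      ≤ (pairs.card : ℝ) * R + (pairs.card : ℝ) * R
        + (pairs.card : ℝ) * ((pairs.card : ℝ) * R) := by
    have h1 : {g : GL (Fin n) F | ff M k g = 0}.ncard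
        ≤ (((⋃ p ∈ pairs, A p) ∪ U) ∪ D).ncard :=
      Set.ncard_le_ncard hcover (Set.toFinite _)
    have h2 : (((⋃ p ∈ pairs, A p) ∪ U) ∪ D).ncard
        ≤ ((⋃ p ∈ pairs, A p).ncard + U.ncard) + D.ncard :=
      le_trans (Set.ncard_union_le _ _) (add_le_add (Set.ncard_union_le _ _) le_rfl)
    have h3 : ({g : GL (Fin n) F | ff M k g = 0}.ncard : ℝ)
        ≤ ((⋃ p ∈ pairs, A p).ncard : ℝ) + (U.ncard : ℝ) + (D.ncard : ℝ) := by
      exact_mod_cast le_trans h1 h2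
    linarith [hAcard', hUcard, hDcard']
  rw [hZ]
  have hfin : ((n : ℝ)^4 + 2*(n : ℝ)^2 + 1) * (q : ℝ) ^ (-1 : ℤ) * (Nat.card (GL (Fin n) F) : ℝ)
      = ((n : ℝ)^4 + 2*(n : ℝ)^2 + 1) * R := by
    rw [hR, _root_.zpow_neg_one]
    ring
  rw [hfin]
  have hn0 : (0 : ℝ) ≤ (n : ℝ) := by positivity
  nlinarith [hmain, hpc, hR0, mul_nonneg (Nat.cast_nonneg pairs.card : (0:ℝ) ≤ _) hR0,
    sq_nonneg ((pairs.card : ℝ) - (n : ℝ)^2)]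
end
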